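/- arXiv:2408.13228 — 5 statements merged into one kernel-verified Lean document; each statement's English description precedes it below -/
import Mathlib

section
/- Let σ be a finite positive Borel measure on ℝ^d and let C ≥ 1 and γ, γ', η > 0 be constants. Assume: (i) σ(C^0_r) ≤ C r^{γ'} for every 0 < r < 1/2; and (ii) for every ω ∈ ℝ^d \ {0} and every 0 < r < 1/2 such that ‖ω‖_∞ ≥ (log(1/(2r)))^{−η}, one has σ(C^ω_r) ≤ C (log(1/r))^{−γ}. Then there exist constants c > 0 and r₁ ∈ (0,1/2), depending only on C, γ, γ', η and d, such that σ(C^ω_r) ≤ c (log(1/r))^{−min(γ, ηγ')} for every ω ∈ ℝ^d and every 0 < r < r₁. -/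
open MeasureTheory Real Complex Finset

/-- The cube `C^ω_r = ∏_i [ω_i − r, ω_i + r]` in `ℝ^d`. -/
def cube {d : ℕ} (ω : Fin d → ℝ) (r : ℝ) : Set (Fin d → ℝ) := {x | ∀ i, |x i - ω i| ≤ r}

open Filter in
private lemma aux_ev (a b : ℝ) (ha : 0 < a) (hb : 0 < b) :
    ∀ᶠ r : ℝ in nhdsWithin 0 (Set.Ioi 0), r ^ a * (Real.log (1/r)) ^ b ≤ 1 := by
  have h := (isLittleO_log_rpow_atTop (show 0 < a/b by positivity)).bound one_pos
  have hx : ∀ᶠ x : ℝ in atTop, (Real.log x) ^ b ≤ x ^ a := by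
    filter_upwards [h, eventually_ge_atTop (1:ℝ)] with x hx hx1
    have hlog : 0 ≤ Real.log x := Real.log_nonneg hx1
    have hxe : Real.log x ≤ x ^ (a/b) := by
      simpa [Real.norm_eq_abs, _root_.abs_of_nonneg hlog,
        _root_.abs_of_nonneg (Real.rpow_nonneg (by linarith : (0:ℝ) ≤ x) _)] using hx
    calc (Real.log x) ^ b ≤ (x ^ (a/b)) ^ b :=
          Real.rpow_le_rpow hlog hxe hb.le
      _ = x ^ a := by
          rw [← Real.rpow_mul (by linarith : (0:ℝ) ≤ x)]
          congr 1; field_simp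
  have hmap : Tendsto (fun r : ℝ => 1/r) (nhdsWithin 0 (Set.Ioi 0)) atTop := by
    simpa [one_div] using tendsto_inv_nhdsGT_zero (𝕜 := ℝ)
  filter_upwards [hmap.eventually hx, self_mem_nhdsWithin] with r hr (hr0 : 0 < r)
  have : (Real.log (1/r)) ^ b ≤ r ^ (-a) := by
    rw [Real.rpow_neg hr0.le, ← Real.inv_rpow hr0.le]
    simpa [one_div] using hr
  calc r ^ a * (Real.log (1/r)) ^ b ≤ r ^ a * r ^ (-a) :=
        mul_le_mul_of_nonneg_left this (Real.rpow_nonneg hr0.le _)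
    _ = 1 := by rw [← Real.rpow_add hr0]; simp

open Filter in
/-- Let `σ` be a finite positive Borel measure on `ℝ^d` and `C ≥ 1`,
`γ, γ', η > 0` constants. Assume: (i) `σ(C^0_r) ≤ C r^{γ'}` for every `0 < r < 1/2`; and
(ii) for every `ω ≠ 0` and every `0 < r < 1/2` such that `‖ω‖_∞ ≥ (log(1/(2r)))^{−η}`, one
has `σ(C^ω_r) ≤ C (log(1/r))^{−γ}`. Then there exist constants `c > 0` and `r₁ ∈ (0,1/2)`,
depending only on `C, γ, γ', η` and `d`, such that
`σ(C^ω_r) ≤ c (log(1/r))^{−min(γ, ηγ')}` for every `ω ∈ ℝ^d` and every `0 < r < r₁`.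
(The constants `c, r₁` are quantified before `σ` to express that they depend only on
`C, γ, γ', η, d`.) -/
theorem gluing_log_holder {d : ℕ} (C γ γ' η : ℝ)
    (hC : 1 ≤ C) (hγ : 0 < γ) (hγ' : 0 < γ') (hη : 0 < η) :
    ∃ c > 0, ∃ r₁ ∈ Set.Ioo (0 : ℝ) (1 / 2),
      ∀ σ : Measure (Fin d → ℝ), IsFiniteMeasure σ →
        (∀ r : ℝ, 0 < r → r < 1 / 2 → (σ (cube 0 r)).toReal ≤ C * r ^ γ') →
        (∀ ω : Fin d → ℝ, ω ≠ 0 → ∀ r : ℝ, 0 < r → r < 1 / 2 →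
          (Real.log (1 / (2 * r))) ^ (-η) ≤ ‖ω‖ →
          (σ (cube ω r)).toReal ≤ C * (Real.log (1 / r)) ^ (-γ)) →
        ∀ ω : Fin d → ℝ, ∀ r : ℝ, 0 < r → r < r₁ →
          (σ (cube ω r)).toReal ≤ c * (Real.log (1 / r)) ^ (-(min γ (η * γ'))) := by
  set m := min γ (η * γ') with hmdef
  have hm : 0 < m := lt_min hγ (by positivity)
  have hmγ : m ≤ γ := min_le_left _ _
  have hmηγ' : m ≤ η * γ' := min_le_right _ _
  set c := C * ((2:ℝ) ^ γ' * (2:ℝ) ^ (η * γ')) with hcdef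
  have h2γ' : (1:ℝ) ≤ (2:ℝ) ^ γ' := Real.one_le_rpow (by norm_num) hγ'.le
  have h2ηγ' : (1:ℝ) ≤ (2:ℝ) ^ (η * γ') := Real.one_le_rpow (by norm_num) (by positivity)
  have hc0 : 0 < c := by positivity
  have hCc : C ≤ c := by
    rw [hcdef]
    have h12 : (1:ℝ) ≤ (2:ℝ) ^ γ' * (2:ℝ) ^ (η * γ') := by nlinarith
    exact le_mul_of_one_le_right (by linarith) h12
  -- eventual conditions
  have hmap : Tendsto (fun r : ℝ => 1/r) (nhdsWithin 0 (Set.Ioi 0)) atTop := by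
    simpa [one_div] using tendsto_inv_nhdsGT_zero (𝕜 := ℝ)
  have hlog1 : Tendsto (fun r : ℝ => Real.log (1/r)) (nhdsWithin 0 (Set.Ioi 0)) atTop :=
    Real.tendsto_log_atTop.comp hmap
  have hlog2 : Tendsto (fun r : ℝ => Real.log (1/(2*r))) (nhdsWithin 0 (Set.Ioi 0)) atTop := by
    apply (tendsto_atTop_add_const_right _ (-Real.log 2) hlog1).congr'
    filter_upwards [self_mem_nhdsWithin] with r (hr : 0 < r)
    rw [show (1:ℝ)/(2*r) = (1/r)/2 by ring,
      Real.log_div (one_div_ne_zero hr.ne') two_ne_zero]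
    ring
  have hLtend : Tendsto (fun r : ℝ => (Real.log (1/(2*r))) ^ (-η))
      (nhdsWithin 0 (Set.Ioi 0)) (nhds 0) := (tendsto_rpow_neg_atTop hη).comp hlog2
  have hA : ∀ᶠ r : ℝ in nhdsWithin 0 (Set.Ioi 0), r < 1/4 :=
    mem_nhdsWithin_of_mem_nhds (Iio_mem_nhds (by norm_num))
  have hCsum : ∀ᶠ r : ℝ in nhdsWithin 0 (Set.Ioi 0),
      (Real.log (1/(2*r))) ^ (-η) + r < 1/2 := by
    have hid : Tendsto (fun r : ℝ => r) (nhdsWithin 0 (Set.Ioi 0)) (nhds 0) :=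
      tendsto_id.mono_left nhdsWithin_le_nhds
    have := (hLtend.add hid).eventually (eventually_lt_nhds (show (0:ℝ)+0 < 1/2 by norm_num))
    simpa using this
  have hB : ∀ᶠ r : ℝ in nhdsWithin 0 (Set.Ioi 0), r ≤ (Real.log (1/(2*r))) ^ (-η) := by
    filter_upwards [aux_ev 1 η one_pos hη, hA, self_mem_nhdsWithin] with r h1 h4 (hr : 0 < r)
    have hY0 : 0 < Real.log (1/(2*r)) := by
      apply Real.log_pos
      rw [lt_div_iff₀ (by linarith)]; linarith
    have hYX : Real.log (1/(2*r)) ≤ Real.log (1/r) := by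
      apply Real.log_le_log (by positivity)
      apply div_le_div_of_nonneg_left one_pos.le (by positivity) (by linarith)
    have hpow : (Real.log (1/(2*r))) ^ η ≤ (Real.log (1/r)) ^ η :=
      Real.rpow_le_rpow hY0.le hYX hη.le
    have h1' : r * (Real.log (1/(2*r))) ^ η ≤ 1 := by
      have : r * (Real.log (1/(2*r))) ^ η ≤ r * (Real.log (1/r)) ^ η :=
        mul_le_mul_of_nonneg_left hpow hr.le
      calc r * (Real.log (1/(2*r))) ^ η ≤ r * (Real.log (1/r)) ^ η := this
        _ = r ^ (1:ℝ) * (Real.log (1/r)) ^ η := by rw [Real.rpow_one]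
        _ ≤ 1 := h1
    rw [Real.rpow_neg hY0.le, ← one_div, le_div_iff₀ (Real.rpow_pos_of_pos hY0 η)]
    exact h1'
  obtain ⟨u, hu, hsub⟩ := mem_nhdsGT_iff_exists_Ioo_subset.mp
    ((hA.and (hB.and hCsum)).and self_mem_nhdsWithin)
  refine ⟨c, hc0, min u (1/4), ⟨lt_min hu (by norm_num),
    lt_of_le_of_lt (min_le_right _ _) (by norm_num)⟩, ?_⟩
  intro σ _ h1 h2 ω r hr0 hrr₁
  obtain ⟨⟨hr4, hrL, hLr⟩, -⟩ := hsub ⟨hr0, lt_of_lt_of_le hrr₁ (min_le_left _ _)⟩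
  set X := Real.log (1/r) with hXdef
  set Y := Real.log (1/(2*r)) with hYdef
  have h1r4 : (4:ℝ) ≤ 1/r := by rw [le_div_iff₀ hr0]; linarith
  have hlog4 : Real.log 4 = 2 * Real.log 2 := by
    rw [show (4:ℝ) = 2^2 by norm_num, Real.log_pow]; push_cast; ring
  have h2log : 2 * Real.log 2 ≤ X := by
    rw [← hlog4]; exact Real.log_le_log (by norm_num) h1r4
  have hl2 : (0.6931471803 : ℝ) < Real.log 2 := Real.log_two_gt_d9
  have hX1 : (1:ℝ) ≤ X := by linarith
  have hX0 : (0:ℝ) < X := by linarith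
  have hYX : Y = X - Real.log 2 := by
    rw [hYdef, show (1:ℝ)/(2*r) = (1/r)/2 by ring,
      Real.log_div (one_div_ne_zero hr0.ne') two_ne_zero]
  have hY0 : 0 < Y := by rw [hYX]; linarith
  have hXY : X/2 ≤ Y := by rw [hYX]; linarith
  have hr12 : r < 1/2 := by linarith
  by_cases hbig : Y ^ (-η) ≤ ‖ω‖
  · have hω : ω ≠ 0 := by
      intro h
      have := Real.rpow_pos_of_pos hY0 (-η)
      rw [h] at hbig; simp at hbig; linarith
    calc (σ (cube ω r)).toReal ≤ C * X ^ (-γ) := h2 ω hω r hr0 hr12 hbig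
      _ ≤ c * X ^ (-m) := by
          apply mul_le_mul hCc
            (Real.rpow_le_rpow_of_exponent_le hX1 (by linarith))
            (Real.rpow_nonneg hX0.le _) hc0.le
  · push_neg at hbig
    have hL0 : 0 < Y ^ (-η) := Real.rpow_pos_of_pos hY0 _
    have hsub' : cube ω r ⊆ cube 0 (‖ω‖ + r) := by
      intro x hx i
      have hxi := hx i
      have hωi : |ω i| ≤ ‖ω‖ := by
        simpa [Real.norm_eq_abs] using norm_le_pi_norm ω i
      have habs : |x i| ≤ |x i - ω i| + |ω i| := by
        simpa using abs_add_le (x i - ω i) (ω i)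
      simp only [Pi.zero_apply, sub_zero]
      linarith
    calc (σ (cube ω r)).toReal
        ≤ (σ (cube 0 (‖ω‖ + r))).toReal :=
          ENNReal.toReal_mono (measure_ne_top σ _) (measure_mono hsub')
      _ ≤ C * (‖ω‖ + r) ^ γ' := by
          apply h1 (‖ω‖ + r) (by positivity)
          have : (0:ℝ) ≤ ‖ω‖ := norm_nonneg ω
          linarith
      _ ≤ C * (2 * Y ^ (-η)) ^ γ' := by
          apply mul_le_mul_of_nonneg_left _ (by linarith)
          apply Real.rpow_le_rpow (by positivity) (by linarith) hγ'.le
      _ = C * (2:ℝ) ^ γ' * Y ^ (-(η * γ')) := by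
          rw [Real.mul_rpow (by norm_num) hL0.le, ← Real.rpow_mul hY0.le, neg_mul]
          ring
      _ ≤ C * (2:ℝ) ^ γ' * (X/2) ^ (-(η * γ')) := by
          apply mul_le_mul_of_nonneg_left _ (by positivity)
          exact Real.rpow_le_rpow_of_nonpos (by positivity) hXY
            (neg_nonpos.mpr (by positivity))
      _ = C * (2:ℝ) ^ γ' * ((2:ℝ) ^ (η * γ') * X ^ (-(η * γ'))) := by
          rw [Real.div_rpow hX0.le (by norm_num : (0:ℝ) ≤ 2),
            Real.rpow_neg (by norm_num : (0:ℝ) ≤ 2), div_eq_mul_inv, inv_inv]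
          ring
      _ ≤ C * (2:ℝ) ^ γ' * ((2:ℝ) ^ (η * γ') * X ^ (-m)) := by
          apply mul_le_mul_of_nonneg_left _ (by positivity)
          apply mul_le_mul_of_nonneg_left _ (by positivity)
          exact Real.rpow_le_rpow_of_exponent_le hX1 (by linarith)
      _ = c * X ^ (-m) := by rw [hcdef]; ring
end

section
/- Let (X, 𝔅, μ) be a probability space with a measure-preserving ℝ^d-action φ, let f ∈ L²(X,μ), and let σ_f be a spectral measure of f. Let Ω : [0,1) → ℝ be a non-decreasing function with Ω(0) = 0, and define G_R(f,ω) = R^{−d} ‖S^f_R(·,ω)‖²_{L²(μ)}. Fix ω ∈ ℝ^d and suppose there exist constants C > 0 and R₀ ≥ 1 such that G_R(f,ω) ≤ C R^d Ω(1/R) for every R ≥ R₀. Then for every 0 < r ≤ 1/(4R₀): σ_f(C^ω_r) ≤ (π²/16)^d · C · Ω(4r). -/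
open MeasureTheory Real Complex Finset

/-- `e[x] = e^{2πix}`. -/
noncomputable def ee (x : ℝ) : ℂ := Complex.exp (2 * Real.pi * Complex.I * x)

/-- The pairing `x · y = ∑ i, x i * y i` on `ℝ^d`. -/
noncomputable def dotR {d : ℕ} (x y : Fin d → ℝ) : ℝ := ∑ i, x i * y i

lemma ee_add (a b : ℝ) : ee (a + b) = ee a * ee b := by
  rw [ee, ee, ee, ← Complex.exp_add]; push_cast; ring_nf

lemma ee_conj (a : ℝ) : (starRingEnd ℂ) (ee a) = ee (-a) := by
  rw [ee, ee, ← Complex.exp_conj]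
  rw [show (2 * ↑Real.pi * Complex.I * ↑a : ℂ) = (((2:ℝ) * Real.pi * a : ℝ) : ℂ) * Complex.I by push_cast; ring]
  rw [map_mul, Complex.conj_I, Complex.conj_ofReal]
  push_cast; ring_nf

lemma norm_ee (a : ℝ) : ‖ee a‖ = 1 := by
  rw [ee, Complex.norm_exp]
  norm_num [Complex.mul_re, Complex.mul_im]

lemma continuous_ee : Continuous ee := by
  unfold ee; fun_prop

lemma ee_kernel_1d {R c : ℝ} (hR : 0 < R) (hc : |c| ≤ 1 / (4 * R)) :
    4 * R / Real.pi ≤ ‖∫ u in Set.Icc (-R) R, ee (c * u)‖ := by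
  rcases eq_or_ne c 0 with rfl | hc0
  · simp only [zero_mul]
    rw [show (ee 0) = 1 by simp [ee], MeasureTheory.setIntegral_const,
      Real.volume_real_Icc_of_le (by linarith : -R ≤ R)]
    rw [show ((R - -R) • (1:ℂ)) = ((2*R : ℝ) : ℂ) by rw [Complex.real_smul]; push_cast; ring]
    rw [Complex.norm_real, Real.norm_eq_abs, _root_.abs_of_nonneg (by linarith)]
    rw [div_le_iff₀ Real.pi_pos]
    nlinarith [Real.pi_gt_three]
  · have hcne : (2 * Real.pi * Complex.I * c : ℂ) ≠ 0 := by
      simp [Complex.ext_iff, Real.pi_ne_zero, hc0, Complex.I_ne_zero]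
    have hIcc : ∫ u in Set.Icc (-R) R, ee (c * u)
        = ∫ u in (-R)..R, Complex.exp ((2 * Real.pi * Complex.I * c) * u) := by
      rw [intervalIntegral.integral_of_le (by linarith), ← MeasureTheory.integral_Icc_eq_integral_Ioc]
      congr 1; ext u; rw [ee]; push_cast; ring_nf
    set θ : ℝ := 2 * Real.pi * c * R with hθ
    have key : Complex.exp ((θ:ℂ) * Complex.I) - Complex.exp ((-θ:ℝ) * Complex.I)
        = 2 * Real.sin θ * Complex.I := by
      rw [Complex.exp_mul_I, Complex.ofReal_neg, Complex.exp_mul_I, Complex.cos_neg,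
        Complex.sin_neg, ← Complex.ofReal_sin]
      ring
    have hval : ∫ u in Set.Icc (-R) R, ee (c * u) = ((Real.sin θ / (Real.pi * c) : ℝ) : ℂ) := by
      rw [hIcc, integral_exp_mul_complex hcne]
      rw [show ((2*(Real.pi:ℂ)*Complex.I*c)*R) = (θ:ℂ) * Complex.I by rw [hθ]; push_cast; ring,
        show ((2*(Real.pi:ℂ)*Complex.I*c)*(-R:ℝ)) = ((-θ:ℝ):ℂ) * Complex.I by rw [hθ]; push_cast; ring]
      rw [div_eq_iff hcne, key]
      push_cast
      have : (Real.pi : ℂ) * c ≠ 0 := by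
        simpa using (by simp [Real.pi_ne_zero, hc0] : Real.pi * c ≠ 0)
      have hc' : (c : ℂ) ≠ 0 := by exact_mod_cast hc0
      field_simp
    rw [hval, Complex.norm_real, Real.norm_eq_abs, abs_div]
    have hcpos : 0 < |c| := abs_pos.mpr hc0
    have habsθ : |θ| = 2 * Real.pi * |c| * R := by
      rw [hθ, abs_mul, abs_mul, abs_mul]
      rw [_root_.abs_of_nonneg (le_of_lt Real.pi_pos), _root_.abs_of_nonneg (le_of_lt hR)]
      norm_num
    have hθle : |θ| ≤ Real.pi / 2 := by
      rw [habsθ]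
      have : |c| * (4 * R) ≤ 1 := by
        rw [← le_div_iff₀ (by positivity)] ; exact hc
      nlinarith [Real.pi_pos]
    have hsin : 2 / Real.pi * |θ| ≤ |Real.sin θ| := by
      refine le_trans (Real.mul_le_sin (abs_nonneg θ) hθle) ?_
      rcases le_or_gt 0 θ with h | h
      · rw [_root_.abs_of_nonneg h]; exact le_abs_self _
      · rw [abs_of_neg h, Real.sin_neg]; exact neg_le_abs _
    have hπc : |Real.pi * c| = Real.pi * |c| := by
      rw [abs_mul, _root_.abs_of_nonneg (le_of_lt Real.pi_pos)]
    rw [hπc, div_le_div_iff₀ Real.pi_pos (by positivity)]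
    calc 4 * R * (Real.pi * |c|) = (2 / Real.pi * (2 * Real.pi * |c| * R)) * Real.pi := by
          field_simp; ring
      _ ≤ |Real.sin θ| * Real.pi := by
          apply mul_le_mul_of_nonneg_right _ (le_of_lt Real.pi_pos)
          rw [← habsθ]; exact hsin

lemma cube_eq_pi {d : ℕ} (ω : Fin d → ℝ) (r : ℝ) :
    cube ω r = Set.pi Set.univ (fun i => Set.Icc (ω i - r) (ω i + r)) := by
  ext x
  simp only [cube, Set.mem_setOf_eq, Set.mem_pi, Set.mem_univ, true_implies, Set.mem_Icc,
    abs_sub_le_iff]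
  constructor
  · intro h i; have := h i; constructor <;> linarith [(h i).1, (h i).2]
  · intro h i; constructor <;> linarith [(h i).1, (h i).2]

lemma cube_measurable {d : ℕ} (ω : Fin d → ℝ) (r : ℝ) : MeasurableSet (cube ω r) := by
  rw [cube_eq_pi]
  exact MeasurableSet.pi Set.countable_univ (fun i _ => measurableSet_Icc)

lemma ee_dot_prod {d : ℕ} (y s : Fin d → ℝ) : ee (dotR y s) = ∏ i, ee (y i * s i) := by
  rw [dotR]
  induction (Finset.univ : Finset (Fin d)) using Finset.induction_on with
  | empty => simp [ee]
  | insert _ _ h ih => rw [Finset.sum_insert h, Finset.prod_insert h, ee_add, ih]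

lemma kernel_cube_prod {d : ℕ} (R : ℝ) (y : Fin d → ℝ) :
    ∫ s in cube (0 : Fin d → ℝ) R, ee (dotR y s)
      = ∏ i, ∫ u in Set.Icc (-R) R, ee (y i * u) := by
  have hms : MeasurableSet (cube (0 : Fin d → ℝ) R) := cube_measurable 0 R
  rw [← MeasureTheory.integral_indicator hms]
  have hpt : ∀ s : Fin d → ℝ, (cube (0 : Fin d → ℝ) R).indicator (fun s => ee (dotR y s)) s
      = ∏ i, (Set.Icc (-R) R).indicator (fun u => ee (y i * u)) (s i) := by
    intro s
    by_cases hs : s ∈ cube (0 : Fin d → ℝ) R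
    · rw [Set.indicator_of_mem hs, ee_dot_prod]
      refine Finset.prod_congr rfl fun i _ => ?_
      rw [Set.indicator_of_mem]
      rw [Set.mem_Icc]
      have := hs i; simp only [Pi.zero_apply, sub_zero] at this
      rw [abs_le] at this; exact this
    · rw [Set.indicator_of_notMem hs]
      simp only [cube, Set.mem_setOf_eq, not_forall] at hs
      obtain ⟨i, hi⟩ := hs
      refine (Finset.prod_eq_zero (Finset.mem_univ i) ?_).symm
      rw [Set.indicator_of_notMem]
      rw [Set.mem_Icc]
      simp only [Pi.zero_apply, sub_zero] at hi
      rw [abs_le] at hi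
      tauto
    
  simp_rw [hpt]
  rw [MeasureTheory.volume_pi, MeasureTheory.integral_fintype_prod_eq_prod
    (f := fun i u => (Set.Icc (-R) R).indicator (fun v => ee (y i * v)) u)]
  refine Finset.prod_congr rfl fun i _ => ?_
  rw [MeasureTheory.integral_indicator measurableSet_Icc]

lemma kernel_cube_lower {d : ℕ} {R : ℝ} (hR : 0 < R) (y : Fin d → ℝ)
    (hy : ∀ i, |y i| ≤ 1 / (4 * R)) :
    (4 * R / Real.pi) ^ d ≤ ‖∫ s in cube (0 : Fin d → ℝ) R, ee (dotR y s)‖ := by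
  rw [kernel_cube_prod, norm_prod]
  calc (4 * R / Real.pi) ^ d = ∏ _i : Fin d, (4 * R / Real.pi) := by
        rw [Finset.prod_const, Finset.card_univ, Fintype.card_fin]
    _ ≤ ∏ i, ‖∫ u in Set.Icc (-R) R, ee (y i * u)‖ := by
        refine Finset.prod_le_prod (fun i _ => by positivity) fun i _ => ee_kernel_1d hR (hy i)

lemma continuous_dotR2 {d : ℕ} : Continuous fun p : (Fin d → ℝ) × (Fin d → ℝ) => dotR p.1 p.2 := by
  unfold dotR; fun_prop

lemma cube_compact {d : ℕ} (ω : Fin d → ℝ) (r : ℝ) : IsCompact (cube ω r) := by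
  rw [cube_eq_pi]; exact isCompact_univ_pi fun i => isCompact_Icc

lemma integral_comp_mp {X : Type*} [MeasurableSpace X] {μ : Measure X} {T : X → X}
    (hT : MeasurePreserving T μ μ) {E : Type*} [NormedAddCommGroup E] [NormedSpace ℝ E]
    {h : X → E} (hh : AEStronglyMeasurable h μ) :
    ∫ x, h (T x) ∂μ = ∫ x, h x ∂μ := by
  conv_rhs => rw [← hT.map_eq]
  rw [integral_map hT.measurable.aemeasurable (by rwa [hT.map_eq])]

lemma int_norm_sq {X : Type*} [MeasurableSpace X] {μ : Measure X} {u : X → ℂ}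
    (hu : MemLp u 2 μ) : Integrable (fun x => ‖u x‖ ^ 2) μ := by
  have := hu.integrable_norm_rpow two_ne_zero ENNReal.ofNat_ne_top
  simp only [ENNReal.toReal_ofNat] at this
  convert this using 2 with x
  rw [← Real.rpow_natCast ‖u x‖ 2]; norm_num

lemma integrable_mul_conj_L2 {X : Type*} [MeasurableSpace X] {μ : Measure X} {u v : X → ℂ}
    (hu : MemLp u 2 μ) (hv : MemLp v 2 μ) :
    Integrable (fun x => u x * (starRingEnd ℂ) (v x)) μ := by
  have h := L2.integrable_inner (𝕜 := ℂ) (hv.toLp v) (hu.toLp u)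
  have h1 := MemLp.coeFn_toLp hu
  have h2 := MemLp.coeFn_toLp hv
  refine (h.congr ?_)
  filter_upwards [h1, h2] with x e1 e2
  simp only [RCLike.inner_apply]
  rw [e1, e2]

lemma dotR_sub_left {d : ℕ} (a b s : Fin d → ℝ) : dotR (a - b) s = dotR a s - dotR b s := by
  unfold dotR; rw [← Finset.sum_sub_distrib]; congr 1; ext i; simp [sub_mul]

lemma main_identity {d : ℕ} {X : Type*} [MeasurableSpace X] (μ : Measure X)
    [IsProbabilityMeasure μ]
    (φ : (Fin d → ℝ) → X → X)
    (hφmeas : Measurable fun p : (Fin d → ℝ) × X => φ p.1 p.2)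
    (hφadd : ∀ s t : Fin d → ℝ, φ (s + t) = φ s ∘ φ t)
    (hφmp : ∀ s : Fin d → ℝ, MeasurePreserving (φ s) μ μ)
    (g : X → ℂ) (hgsm : StronglyMeasurable g) (hg : MemLp g 2 μ)
    (σf : Measure (Fin d → ℝ)) [IsFiniteMeasure σf]
    (hspec : ∀ s : Fin d → ℝ,
      ∫ ξ, ee (-(dotR ξ s)) ∂σf = ∫ x, g (φ s x) * (starRingEnd ℂ) (g x) ∂μ)
    (ω : Fin d → ℝ) (R : ℝ) (hR : 0 < R) :
    ∫ x, ‖∫ s in cube 0 R, ee (dotR ω s) * g (φ s x)‖ ^ 2 ∂μ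
      = ∫ ξ, ‖∫ s in cube (0 : Fin d → ℝ) R, ee (dotR (ω - ξ) s)‖ ^ 2 ∂σf := by
  classical
  set ν : Measure (Fin d → ℝ) := volume.restrict (cube (0 : Fin d → ℝ) R) with hν
  haveI hνfin : IsFiniteMeasure ν := by
    constructor
    rw [hν, Measure.restrict_apply_univ]
    exact (cube_compact 0 R).measure_lt_top
  set F : (Fin d → ℝ) → X → ℂ := fun s x => ee (dotR ω s) * g (φ s x) with hF
  have hφs : ∀ s : Fin d → ℝ, Measurable (φ s) := fun s =>
    hφmeas.comp (measurable_const.prodMk measurable_id)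
  have hgm : Measurable g := hgsm.measurable
  -- measurability of the big integrand
  have hFm : Measurable (fun q : ((Fin d → ℝ) × (Fin d → ℝ)) × X =>
      F q.1.1 q.2 * (starRingEnd ℂ) (F q.1.2 q.2)) := by
    apply Measurable.mul
    · apply Measurable.mul
      · exact continuous_ee.measurable.comp
          ((continuous_dotR2.measurable).comp
            (measurable_const.prodMk (measurable_fst.comp measurable_fst)))
      · exact hgm.comp (hφmeas.comp
          ((measurable_fst.comp measurable_fst).prodMk measurable_snd))
    · apply (Complex.continuous_conj.measurable).comp
      apply Measurable.mul
      · exact continuous_ee.measurable.comp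
          ((continuous_dotR2.measurable).comp
            (measurable_const.prodMk (measurable_snd.comp measurable_fst)))
      · exact hgm.comp (hφmeas.comp
          ((measurable_snd.comp measurable_fst).prodMk measurable_snd))
  have hgφ : ∀ s : Fin d → ℝ, MemLp (fun x => g (φ s x)) 2 μ := fun s =>
    hg.comp_measurePreserving (hφmp s)
  -- integrability of sections
  have hsec : ∀ s t : Fin d → ℝ, Integrable (fun x => F s x * (starRingEnd ℂ) (F t x)) μ := by
    intro s t
    have : (fun x => F s x * (starRingEnd ℂ) (F t x))
        = fun x => (ee (dotR ω s) * (starRingEnd ℂ) (ee (dotR ω t)))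
            * (g (φ s x) * (starRingEnd ℂ) (g (φ t x))) := by
      funext x; rw [hF]; simp only [map_mul]; ring
    rw [this]
    exact (integrable_mul_conj_L2 (hgφ s) (hgφ t)).const_mul _
  -- the constant `c = ∫ ‖g‖²`
  set c : ℝ := ∫ x, ‖g x‖ ^ 2 ∂μ with hc
  have hgsq : Integrable (fun x => ‖g x‖ ^ 2) μ := int_norm_sq hg
  have hcomp_sq : ∀ s : Fin d → ℝ, ∫ x, ‖g (φ s x)‖ ^ 2 ∂μ = c := by
    intro s
    exact integral_comp_mp (hφmp s) (hgsm.norm.pow 2).aestronglyMeasurable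
  have hnormbound : ∀ s t : Fin d → ℝ, ∫ x, ‖F s x * (starRingEnd ℂ) (F t x)‖ ∂μ ≤ c := by
    intro s t
    have hint : Integrable (fun x => (1/2) * ‖g (φ s x)‖ ^ 2 + (1/2) * ‖g (φ t x)‖ ^ 2) μ :=
      ((int_norm_sq (hgφ s)).const_mul _).add ((int_norm_sq (hgφ t)).const_mul _)
    have hb : ∀ x, ‖F s x * (starRingEnd ℂ) (F t x)‖
        ≤ (1/2) * ‖g (φ s x)‖ ^ 2 + (1/2) * ‖g (φ t x)‖ ^ 2 := by
      intro x
      rw [norm_mul, RCLike.norm_conj, hF]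
      simp only [norm_mul, norm_ee, one_mul]
      nlinarith [norm_nonneg (g (φ s x)), norm_nonneg (g (φ t x)),
        sq_nonneg (‖g (φ s x)‖ - ‖g (φ t x)‖)]
    calc ∫ x, ‖F s x * (starRingEnd ℂ) (F t x)‖ ∂μ
        ≤ ∫ x, ((1/2) * ‖g (φ s x)‖ ^ 2 + (1/2) * ‖g (φ t x)‖ ^ 2) ∂μ := by
          apply integral_mono_of_nonneg (Filter.Eventually.of_forall fun x => norm_nonneg _)
            hint (Filter.Eventually.of_forall hb)
      _ = c := by
          rw [integral_add ((int_norm_sq (hgφ s)).const_mul _) ((int_norm_sq (hgφ t)).const_mul _),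
            integral_const_mul, integral_const_mul, hcomp_sq, hcomp_sq]
          ring
  -- full integrability on (ν.prod ν).prod μ
  have hFaesm : AEStronglyMeasurable (fun q : ((Fin d → ℝ) × (Fin d → ℝ)) × X =>
      F q.1.1 q.2 * (starRingEnd ℂ) (F q.1.2 q.2)) ((ν.prod ν).prod μ) :=
    hFm.aestronglyMeasurable
  have hIunc : Integrable (Function.uncurry fun (p : (Fin d → ℝ) × (Fin d → ℝ)) (x : X) =>
      F p.1 x * (starRingEnd ℂ) (F p.2 x)) ((ν.prod ν).prod μ) := by
    rw [Function.uncurry_def]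
    rw [integrable_prod_iff hFaesm]
    constructor
    · exact Filter.Eventually.of_forall fun p => hsec p.1 p.2
    · apply Integrable.mono' (integrable_const c)
        (hFaesm.norm.integral_prod_right')
      apply Filter.Eventually.of_forall
      intro p
      rw [Real.norm_eq_abs, _root_.abs_of_nonneg (integral_nonneg fun x => norm_nonneg _)]
      exact hnormbound p.1 p.2
  -- Step 1: pointwise, the squared norm is a double integral
  have hstep1 : ∀ x : X, ((‖∫ s, F s x ∂ν‖ ^ 2 : ℝ) : ℂ)
      = ∫ p : (Fin d → ℝ) × (Fin d → ℝ), F p.1 x * (starRingEnd ℂ) (F p.2 x) ∂(ν.prod ν) := by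
    intro x
    rw [integral_prod_mul (f := fun s => F s x) (g := fun t => (starRingEnd ℂ) (F t x)),
      integral_conj, Complex.mul_conj, Complex.normSq_eq_norm_sq]
  -- Step 2: the inner μ-integral via the spectral measure
  have hdotsubr : ∀ (ξ s t : Fin d → ℝ), dotR ξ (s - t) = dotR ξ s - dotR ξ t := by
    intro ξ s t; unfold dotR; rw [← Finset.sum_sub_distrib]; congr 1; ext i
    simp [mul_sub]
  have hinner : ∀ p : (Fin d → ℝ) × (Fin d → ℝ),
      ∫ x, F p.1 x * (starRingEnd ℂ) (F p.2 x) ∂μ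
        = ∫ ξ, ee (dotR (ω - ξ) p.1) * ee (-(dotR (ω - ξ) p.2)) ∂σf := by
    rintro ⟨s, t⟩
    have e1 : (fun x => F s x * (starRingEnd ℂ) (F t x))
        = fun x => (ee (dotR ω s) * ee (-(dotR ω t)))
            * (g (φ s x) * (starRingEnd ℂ) (g (φ t x))) := by
      funext x; rw [hF]; simp only [map_mul, ee_conj]; ring
    have hcomp : φ s = φ (s - t) ∘ φ t := by rw [← hφadd, sub_add_cancel]
    calc ∫ x, F s x * (starRingEnd ℂ) (F t x) ∂μ
        = (ee (dotR ω s) * ee (-(dotR ω t)))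
            * ∫ x, g (φ s x) * (starRingEnd ℂ) (g (φ t x)) ∂μ := by
          rw [e1, integral_const_mul]
      _ = (ee (dotR ω s) * ee (-(dotR ω t)))
            * ∫ x, g (φ (s - t) x) * (starRingEnd ℂ) (g x) ∂μ := by
          congr 1
          have hmeas : AEStronglyMeasurable
              (fun y => g (φ (s - t) y) * (starRingEnd ℂ) (g y)) μ :=
            ((hgsm.comp_measurable (hφs (s - t))).mul
              (Complex.continuous_conj.comp_stronglyMeasurable hgsm)).aestronglyMeasurable
          rw [hcomp]
          exact integral_comp_mp (hφmp t) hmeas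
      _ = (ee (dotR ω s) * ee (-(dotR ω t))) * ∫ ξ, ee (-(dotR ξ (s - t))) ∂σf := by
          rw [hspec]
      _ = ∫ ξ, ee (dotR (ω - ξ) s) * ee (-(dotR (ω - ξ) t)) ∂σf := by
          rw [← integral_const_mul]
          congr 1; funext ξ
          rw [← ee_add, ← ee_add, ← ee_add]
          congr 1
          rw [dotR_sub_left, dotR_sub_left, hdotsubr]
          ring
  -- Step 3: swap the double (ν × ν) integral with the σf integral
  have hGcont : Continuous (fun q : ((Fin d → ℝ) × (Fin d → ℝ)) × (Fin d → ℝ) =>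
      ee (dotR (ω - q.2) q.1.1) * ee (-(dotR (ω - q.2) q.1.2))) := by
    apply Continuous.mul
    · exact continuous_ee.comp (continuous_dotR2.comp
        (((continuous_const.sub continuous_snd)).prodMk (continuous_fst.fst)))
    · exact continuous_ee.comp (Continuous.neg (continuous_dotR2.comp
        (((continuous_const.sub continuous_snd)).prodMk (continuous_fst.snd))))
  have hGint : Integrable (Function.uncurry fun (p : (Fin d → ℝ) × (Fin d → ℝ))
      (ξ : Fin d → ℝ) => ee (dotR (ω - ξ) p.1) * ee (-(dotR (ω - ξ) p.2)))
      ((ν.prod ν).prod σf) := by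
    apply Integrable.mono' (integrable_const 1) hGcont.aestronglyMeasurable
    apply Filter.Eventually.of_forall
    intro q
    simp only [Function.uncurry_def, norm_mul, norm_ee, one_mul, le_refl]
  -- Step 4: the kernel factorization under the σf integral
  have hker : ∀ ξ : Fin d → ℝ,
      (∫ p : (Fin d → ℝ) × (Fin d → ℝ),
        ee (dotR (ω - ξ) p.1) * ee (-(dotR (ω - ξ) p.2)) ∂(ν.prod ν))
      = ((‖∫ s, ee (dotR (ω - ξ) s) ∂ν‖ ^ 2 : ℝ) : ℂ) := by
    intro ξ
    rw [integral_prod_mul (f := fun s => ee (dotR (ω - ξ) s))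
      (g := fun t => ee (-(dotR (ω - ξ) t)))]
    have : (fun t => ee (-(dotR (ω - ξ) t))) = fun t => (starRingEnd ℂ) (ee (dotR (ω - ξ) t)) := by
      funext t; rw [ee_conj]
    rw [this, integral_conj, Complex.mul_conj, Complex.normSq_eq_norm_sq]
  -- Assemble
  have hor1 : ∫ x, ((‖∫ s, F s x ∂ν‖ ^ 2 : ℝ) : ℂ) ∂μ
      = ((∫ x, ‖∫ s, F s x ∂ν‖ ^ 2 ∂μ : ℝ) : ℂ) := integral_ofReal (𝕜 := ℂ)
  have hor2 : ∫ ξ, ((‖∫ s, ee (dotR (ω - ξ) s) ∂ν‖ ^ 2 : ℝ) : ℂ) ∂σf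
      = ((∫ ξ, ‖∫ s, ee (dotR (ω - ξ) s) ∂ν‖ ^ 2 ∂σf : ℝ) : ℂ) := integral_ofReal (𝕜 := ℂ)
  have final : ((∫ x, ‖∫ s, F s x ∂ν‖ ^ 2 ∂μ : ℝ) : ℂ)
      = ((∫ ξ, ‖∫ s, ee (dotR (ω - ξ) s) ∂ν‖ ^ 2 ∂σf : ℝ) : ℂ) := by
    rw [← hor1, ← hor2]
    calc ∫ x, ((‖∫ s, F s x ∂ν‖ ^ 2 : ℝ) : ℂ) ∂μ
        = ∫ x, ∫ p : (Fin d → ℝ) × (Fin d → ℝ),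
            F p.1 x * (starRingEnd ℂ) (F p.2 x) ∂(ν.prod ν) ∂μ := by
          congr 1; funext x; exact hstep1 x
      _ = ∫ p : (Fin d → ℝ) × (Fin d → ℝ), ∫ x,
            F p.1 x * (starRingEnd ℂ) (F p.2 x) ∂μ ∂(ν.prod ν) :=
          (integral_integral_swap hIunc).symm
      _ = ∫ p : (Fin d → ℝ) × (Fin d → ℝ), ∫ ξ,
            ee (dotR (ω - ξ) p.1) * ee (-(dotR (ω - ξ) p.2)) ∂σf ∂(ν.prod ν) := by
          congr 1; funext p; exact hinner p
      _ = ∫ ξ, ∫ p : (Fin d → ℝ) × (Fin d → ℝ),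
            ee (dotR (ω - ξ) p.1) * ee (-(dotR (ω - ξ) p.2)) ∂(ν.prod ν) ∂σf :=
          integral_integral_swap hGint
      _ = ∫ ξ, ((‖∫ s, ee (dotR (ω - ξ) s) ∂ν‖ ^ 2 : ℝ) : ℂ) ∂σf := by
          congr 1; funext ξ; exact hker ξ
  exact_mod_cast final

/-- Let `(X, 𝔅, μ)` be a probability space with a measure-preserving
`ℝ^d`-action `φ`, `f ∈ L²(X,μ)`, and `σ_f` a spectral measure of `f`. Let
`Ω : [0,1) → ℝ` be non-decreasing with `Ω(0) = 0`, and define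
`G_R(f,ω) = R^{−d} ‖S^f_R(·,ω)‖²_{L²(μ)}`. Fix `ω ∈ ℝ^d` and suppose there exist constants
`C > 0` and `R₀ ≥ 1` such that `G_R(f,ω) ≤ C R^d Ω(1/R)` for every `R ≥ R₀`. Then for every
`0 < r ≤ 1/(4R₀)`: `σ_f(C^ω_r) ≤ (π²/16)^d · C · Ω(4r)`. -/
theorem spectral_measure_local_bound {d : ℕ}
    {X : Type*} [MeasurableSpace X] (μ : Measure X) [IsProbabilityMeasure μ]
    (φ : (Fin d → ℝ) → X → X)
    (hφmeas : Measurable fun p : (Fin d → ℝ) × X => φ p.1 p.2)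
    (hφ0 : φ 0 = id)
    (hφadd : ∀ s t : Fin d → ℝ, φ (s + t) = φ s ∘ φ t)
    (hφmp : ∀ s : Fin d → ℝ, MeasurePreserving (φ s) μ μ)
    (f : X → ℂ) (hf : MemLp f 2 μ)
    (σf : Measure (Fin d → ℝ)) [IsFiniteMeasure σf]
    (hspec : ∀ s : Fin d → ℝ,
      ∫ ω, ee (-(dotR ω s)) ∂σf = ∫ x, f (φ s x) * (starRingEnd ℂ) (f x) ∂μ)
    (Ω : ℝ → ℝ) (hΩmono : MonotoneOn Ω (Set.Ico 0 1)) (hΩ0 : Ω 0 = 0)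
    (ω : Fin d → ℝ) (C R₀ : ℝ) (hC : 0 < C) (hR₀ : 1 ≤ R₀)
    (hG : ∀ R : ℝ, R₀ ≤ R →
      (1 / R ^ d) * ∫ x, ‖∫ s in cube 0 R, ee (dotR ω s) * f (φ s x)‖ ^ 2 ∂μ
        ≤ C * R ^ d * Ω (1 / R)) :
    ∀ r : ℝ, 0 < r → r ≤ 1 / (4 * R₀) →
      (σf (cube ω r)).toReal ≤ (Real.pi ^ 2 / 16) ^ d * C * Ω (4 * r) := by
  intro r hr hrR
  have hR₀pos : 0 < R₀ := lt_of_lt_of_le one_pos hR₀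
  set R : ℝ := 1 / (4 * r) with hRdef
  have hR0 : 0 < R := by rw [hRdef]; positivity
  have hRge : R₀ ≤ R := by
    rw [hRdef, le_div_iff₀ (by positivity)]
    rw [le_div_iff₀ (by positivity)] at hrR
    linarith
  have h1R : 1 / R = 4 * r := by rw [hRdef]; field_simp
  have hrR' : r = 1 / (4 * R) := by rw [hRdef]; field_simp
  have hφs : ∀ s : Fin d → ℝ, Measurable (φ s) := fun s =>
    hφmeas.comp (measurable_const.prodMk measurable_id)
  -- measurable representative
  set g : X → ℂ := hf.aestronglyMeasurable.mk f with hgdef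
  have hgsm : StronglyMeasurable g := hf.aestronglyMeasurable.stronglyMeasurable_mk
  have hfg : f =ᵐ[μ] g := hf.aestronglyMeasurable.ae_eq_mk
  have hg : MemLp g 2 μ := hf.ae_eq hfg
  have hφcomp_ae : ∀ s : Fin d → ℝ, (fun x => f (φ s x)) =ᵐ[μ] fun x => g (φ s x) := by
    intro s
    exact ae_eq_comp (hφs s).aemeasurable (by rwa [(hφmp s).map_eq])
  have hspecg : ∀ s : Fin d → ℝ,
      ∫ ξ, ee (-(dotR ξ s)) ∂σf = ∫ x, g (φ s x) * (starRingEnd ℂ) (g x) ∂μ := by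
    intro s
    rw [hspec s]
    apply integral_congr_ae
    filter_upwards [hφcomp_ae s, hfg] with x e1 e2
    rw [e1, e2]
  -- the Birkhoff integrals of `f` and `g` agree a.e.
  set ν : Measure (Fin d → ℝ) := volume.restrict (cube (0 : Fin d → ℝ) R) with hν
  have hSfg : ∫ x, ‖∫ s in cube 0 R, ee (dotR ω s) * f (φ s x)‖ ^ 2 ∂μ
      = ∫ x, ‖∫ s in cube 0 R, ee (dotR ω s) * g (φ s x)‖ ^ 2 ∂μ := by
    set N : Set X := toMeasurable μ {x | f x ≠ g x} with hNdef
    have hNm : MeasurableSet N := measurableSet_toMeasurable μ _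
    have hNnull : μ N = 0 := by
      rw [hNdef, measure_toMeasurable]
      exact ae_iff.mp hfg
    have hfN : ∀ x, x ∉ N → f x = g x := by
      intro x hx
      by_contra h
      exact hx (subset_toMeasurable μ _ h)
    set M : Set ((Fin d → ℝ) × X) := {p | φ p.1 p.2 ∈ N} with hMdef
    have hMm : MeasurableSet M := hφmeas hNm
    have hMnull : (ν.prod μ) M = 0 := by
      rw [Measure.measure_prod_null hMm]
      apply Filter.Eventually.of_forall
      intro s
      have h2 : μ (φ s ⁻¹' N) = 0 := by
        rw [(hφmp s).measure_preimage hNm.nullMeasurableSet]; exact hNnull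
      exact h2
    have hswapm : MeasurableSet (Prod.swap ⁻¹' M : Set (X × (Fin d → ℝ))) :=
      measurable_swap hMm
    have hMnull' : (μ.prod ν) (Prod.swap ⁻¹' M) = 0 := by
      have := Measure.prod_swap (μ := μ) (ν := ν)
      rw [← this, Measure.map_apply measurable_swap hMm] at hMnull
      exact hMnull
    have hae := (Measure.measure_prod_null hswapm).mp hMnull'
    apply integral_congr_ae
    filter_upwards [hae] with x hx
    have hsec : ∀ᵐ s ∂ν, φ s x ∉ N := by
      have : (Prod.mk x ⁻¹' (Prod.swap ⁻¹' M)) = {s | φ s x ∈ N} := rfl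
      rw [this] at hx
      exact ae_iff.mpr (by simpa using hx)
    have : ∫ s in cube 0 R, ee (dotR ω s) * f (φ s x)
        = ∫ s in cube 0 R, ee (dotR ω s) * g (φ s x) := by
      apply integral_congr_ae
      filter_upwards [hsec] with s hs
      rw [hfN _ hs]
    rw [this]
  -- main identity
  have hmain := main_identity μ φ hφmeas hφadd hφmp g hgsm hg σf hspecg ω R hR0
  -- kernel lower bound on the cube
  set K : (Fin d → ℝ) → ℂ := fun ξ => ∫ s in cube (0 : Fin d → ℝ) R, ee (dotR (ω - ξ) s)
    with hKdef
  have hlow : ∀ ξ ∈ cube ω r, ((4 * R / Real.pi) ^ d) ^ 2 ≤ ‖K ξ‖ ^ 2 := by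
    intro ξ hξ
    have h1 : (4 * R / Real.pi) ^ d ≤ ‖K ξ‖ := by
      apply kernel_cube_lower hR0
      intro i
      have := hξ i
      rw [show |(ω - ξ) i| = |ξ i - ω i| by rw [Pi.sub_apply, abs_sub_comm], ← hrR']
      exact this
    have h2 : (0:ℝ) ≤ (4 * R / Real.pi) ^ d := by positivity
    nlinarith [norm_nonneg (K ξ)]
  -- integrability of the kernel against σf
  have hKsm : StronglyMeasurable K := by
    have hcont : Continuous fun q : (Fin d → ℝ) × (Fin d → ℝ) => ee (dotR (ω - q.1) q.2) :=
      continuous_ee.comp (continuous_dotR2.comp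
        ((continuous_const.sub continuous_fst).prodMk continuous_snd))
    exact hcont.stronglyMeasurable.integral_prod_right'
  haveI hνfin : IsFiniteMeasure ν := by
    constructor
    rw [hν, Measure.restrict_apply_univ]
    exact (cube_compact 0 R).measure_lt_top
  set B : ℝ := (ν Set.univ).toReal with hB
  have hKbd : ∀ ξ, ‖K ξ‖ ≤ 1 * B := by
    intro ξ
    exact norm_integral_le_of_norm_le_const
      (Filter.Eventually.of_forall fun s => le_of_eq (norm_ee _))
  have hKint : Integrable (fun ξ => ‖K ξ‖ ^ 2) σf := by
    apply Integrable.mono' (integrable_const ((1*B)^2))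
      (((continuous_pow 2).comp_stronglyMeasurable hKsm.norm).aestronglyMeasurable)
    apply Filter.Eventually.of_forall
    intro ξ
    rw [Real.norm_eq_abs, _root_.abs_of_nonneg (by positivity)]
    have := hKbd ξ
    nlinarith [norm_nonneg (K ξ)]
  -- putting it together
  have chain : ((4 * R / Real.pi) ^ d) ^ 2 * (σf (cube ω r)).toReal
      ≤ ∫ x, ‖∫ s in cube 0 R, ee (dotR ω s) * f (φ s x)‖ ^ 2 ∂μ := by
    calc ((4 * R / Real.pi) ^ d) ^ 2 * (σf (cube ω r)).toReal
        ≤ ∫ ξ in cube ω r, ‖K ξ‖ ^ 2 ∂σf :=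
          by have := setIntegral_ge_of_const_le (cube_measurable ω r) (measure_ne_top σf _)
               hlow hKint.integrableOn
             rw [smul_eq_mul, mul_comm] at this; exact this
      _ ≤ ∫ ξ, ‖K ξ‖ ^ 2 ∂σf :=
          setIntegral_le_integral hKint
            (Filter.Eventually.of_forall fun ξ => by positivity)
      _ = ∫ x, ‖∫ s in cube 0 R, ee (dotR ω s) * g (φ s x)‖ ^ 2 ∂μ := hmain.symm
      _ = ∫ x, ‖∫ s in cube 0 R, ee (dotR ω s) * f (φ s x)‖ ^ 2 ∂μ := hSfg.symm
  have hGR := hG R hRge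
  have hRd : (0:ℝ) < R ^ d := by positivity
  have hup : ∫ x, ‖∫ s in cube 0 R, ee (dotR ω s) * f (φ s x)‖ ^ 2 ∂μ
      ≤ C * R ^ d * Ω (1 / R) * R ^ d := by
    rw [div_mul_eq_mul_div, div_le_iff₀ hRd, one_mul] at hGR
    linarith [hGR]
  have hkey : ((4 * R / Real.pi) ^ d) ^ 2 * ((Real.pi ^ 2 / 16) ^ d) = R ^ d * R ^ d := by
    have hpi : Real.pi ≠ 0 := Real.pi_ne_zero
    rw [← pow_mul, mul_comm d 2, pow_mul, ← mul_pow, ← mul_pow]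
    congr 1
    field_simp
    ring
  have hfinal : ((4 * R / Real.pi) ^ d) ^ 2 * (σf (cube ω r)).toReal
      ≤ ((4 * R / Real.pi) ^ d) ^ 2 * ((Real.pi ^ 2 / 16) ^ d * C * Ω (4 * r)) := by
    calc ((4 * R / Real.pi) ^ d) ^ 2 * (σf (cube ω r)).toReal
        ≤ C * R ^ d * Ω (1 / R) * R ^ d := le_trans chain hup
      _ = ((4 * R / Real.pi) ^ d) ^ 2 * ((Real.pi ^ 2 / 16) ^ d * C * Ω (4 * r)) := by
          rw [h1R]
          calc C * R ^ d * Ω (4 * r) * R ^ d = (R ^ d * R ^ d) * (C * Ω (4 * r)) := by ring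
            _ = (((4 * R / Real.pi) ^ d) ^ 2 * ((Real.pi ^ 2 / 16) ^ d)) * (C * Ω (4 * r)) := by
                rw [hkey]
            _ = ((4 * R / Real.pi) ^ d) ^ 2 * ((Real.pi ^ 2 / 16) ^ d * C * Ω (4 * r)) := by
                ring
  have hpos : (0:ℝ) < ((4 * R / Real.pi) ^ d) ^ 2 := by
    have : (0:ℝ) < 4 * R / Real.pi := by positivity
    positivity
  exact le_of_mul_le_mul_left hfinal hpos
end

section
/- Let S be an m×m matrix with nonnegative real entries and max_{l,l'} S(l,l') > 0, let M be a complex m×m matrix, k₀ ∈ {1,…,m} an index, and c ≥ 0 a real number such that |M(j,k)| ≤ S(j,k) for all j,k and |M(j,k₀)| ≤ S(j,k₀) − c for all j. Then for every x ∈ ℝ^m with positive entries and every j ∈ {1,…,m}: Σ_{k=1}^m |M(j,k)| x(k) ≤ (1 − Ξ[x,k₀] c) · (Sx)(j), where Ξ[x,k₀] = x(k₀) / ( m · max_{l,l'} S(l,l') · max_l x(l) ). -/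
open MeasureTheory Real Complex Finset Matrix

/-- `Ξ[x,k₀] = x(k₀) / (m · max_{l,l'} S(l,l') · max_l x(l))` (the suprema are maxima
since `Fin m` is finite and nonempty in all uses). -/
noncomputable def Xi {m : ℕ} (S : Matrix (Fin m) (Fin m) ℝ) (x : Fin m → ℝ) (k₀ : Fin m) :
    ℝ :=
  x k₀ / ((m : ℝ) * (⨆ l, ⨆ l', S l l') * ⨆ l, x l)

/-- one-step Riesz-product estimate, from the proof of Proposition 3.2:
if `|M(j,k)| ≤ S(j,k)` for all `j,k` and `|M(j,k₀)| ≤ S(j,k₀) − c`, then for every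
positive vector `x` and every `j`:
`Σ_k |M(j,k)| x(k) ≤ (1 − Ξ[x,k₀] c) · (Sx)(j)`. -/
theorem one_step_riesz_estimate {m : ℕ} (S : Matrix (Fin m) (Fin m) ℝ)
    (hS0 : ∀ l l', 0 ≤ S l l') (hSpos : 0 < ⨆ l, ⨆ l', S l l')
    (M : Matrix (Fin m) (Fin m) ℂ) (k₀ : Fin m) (c : ℝ) (hc : 0 ≤ c)
    (hM : ∀ j k, ‖M j k‖ ≤ S j k)
    (hMk : ∀ j, ‖M j k₀‖ ≤ S j k₀ - c) :
    ∀ x : Fin m → ℝ, (∀ l, 0 < x l) → ∀ j : Fin m,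
      ∑ k, ‖M j k‖ * x k ≤ (1 - Xi S x k₀ * c) * (S.mulVec x) j := by
  intro x hx j
  set A := ⨆ l, ⨆ l', S l l' with hA
  set X := ⨆ l, x l with hX
  have hbA : ∀ l l', S l l' ≤ A := fun l l' =>
    le_trans (le_ciSup (Set.Finite.bddAbove (Set.finite_range _)) l')
      (le_ciSup (f := fun l => ⨆ l', S l l')
        (Set.Finite.bddAbove (Set.finite_range _)) l)
  have hbX : ∀ l, x l ≤ X := fun l =>
    le_ciSup (Set.Finite.bddAbove (Set.finite_range _)) l
  have hXpos : 0 < X := lt_of_lt_of_le (hx j) (hbX j)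
  have hm : (0:ℝ) < m := by exact_mod_cast j.pos
  have hD : 0 < (m:ℝ) * A * X := by positivity
  have h2 : S.mulVec x j = ∑ k, S j k * x k := by
    simp [Matrix.mulVec, dotProduct]
  have h1 : ∑ k, ‖M j k‖ * x k ≤ ∑ k, S j k * x k - c * x k₀ := by
    have hterm : ∀ k ∈ Finset.univ, ‖M j k‖ * x k ≤
        S j k * x k - (if k = k₀ then c * x k₀ else 0) := by
      intro k _
      by_cases hk : k = k₀
      · subst hk
        rw [if_pos rfl]
        nlinarith [hMk j, hx k, norm_nonneg (M j k)]
      · simp only [if_neg hk, sub_zero]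
        exact mul_le_mul_of_nonneg_right (hM j k) (hx k).le
    calc ∑ k, ‖M j k‖ * x k
        ≤ ∑ k, (S j k * x k - (if k = k₀ then c * x k₀ else 0)) :=
          Finset.sum_le_sum hterm
      _ = ∑ k, S j k * x k - c * x k₀ := by
          rw [Finset.sum_sub_distrib, Finset.sum_ite_eq' Finset.univ k₀]
          simp
  have hSum_le : ∑ k, S j k * x k ≤ (m:ℝ) * A * X := by
    calc ∑ k, S j k * x k ≤ ∑ _k : Fin m, A * X := by
          refine Finset.sum_le_sum fun k _ => ?_
          exact mul_le_mul (hbA j k) (hbX k) (hx k).le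
            (le_trans (hS0 j k) (hbA j k))
      _ = (m:ℝ) * A * X := by
          simp [Finset.sum_const, mul_assoc]
  have hXi : Xi S x k₀ * (∑ k, S j k * x k) ≤ x k₀ := by
    rw [Xi, ← hA, ← hX, div_mul_eq_mul_div, div_le_iff₀ hD]
    exact mul_le_mul_of_nonneg_left hSum_le (hx k₀).le
  have hSnn : 0 ≤ ∑ k, S j k * x k :=
    Finset.sum_nonneg fun k _ => mul_nonneg (hS0 j k) (hx k).le
  rw [h2]
  nlinarith [hXi, h1, hc]
end

section
/- Let M be an N×N matrix with integer entries and let p(X) = X^t − c_{t−1}X^{t−1} − ⋯ − c_1 X − c_0 ∈ ℤ[X] be a monic polynomial with p(M) = 0. Let ω̃ ∈ ℝ^N and for each n ≥ 0 let K_n ∈ ℤ^N and ε_n := M^n ω̃ − K_n ∈ ℝ^N. Set δ₀ = 1/(1 + Σ_{i=0}^{t−1} |c_i|). If for some n one has ‖ε_{n+i}‖_∞ < δ₀ for every i = 0, 1, …, t, then ε_{n+t} = Σ_{i=0}^{t−1} c_i ε_{n+i} and K_{n+t} = Σ_{i=0}^{t−1} c_i K_{n+i}. -/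
open MeasureTheory Real Complex Finset Matrix

private lemma sum_mulVec' {N R : Type*} [Fintype N] [NonUnitalNonAssocSemiring R]
    {ι : Type*} (s : Finset ι) (f : ι → Matrix N N R) (w : N → R) :
    (∑ i ∈ s, f i).mulVec w = ∑ i ∈ s, (f i).mulVec w := by
  induction s using Finset.cons_induction with
  | empty => simp [Matrix.zero_mulVec]
  | cons a s ha ih => simp [Finset.sum_cons, Matrix.add_mulVec, ih]

/-- integer-detection step from the proof of Proposition 4.1: let `M` be an
`N×N` integer matrix annihilated by the monic polynomial
`p(X) = X^t − c_{t−1}X^{t−1} − ⋯ − c_0`, let `w ∈ ℝ^N`, and for each `n` let `K_n ∈ ℤ^N`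
and `ε_n = M^n w − K_n`. If `‖ε_{n+i}‖_∞ < δ₀ = 1/(1+Σ|c_i|)` for `i = 0,…,t`, then
`ε_{n+t} = Σ_{i<t} c_i ε_{n+i}` and `K_{n+t} = Σ_{i<t} c_i K_{n+i}`. -/
theorem integer_detection {N t : ℕ} (M : Matrix (Fin N) (Fin N) ℤ) (c : Fin t → ℤ)
    (hp : M ^ t = ∑ i : Fin t, c i • M ^ (i : ℕ))
    (w : Fin N → ℝ) (K : ℕ → Fin N → ℤ) (ε : ℕ → Fin N → ℝ)
    (hε : ∀ n : ℕ, ε n =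
      ((M.map (Int.cast : ℤ → ℝ)) ^ n).mulVec w - fun i => ((K n i : ℝ)))
    (n : ℕ)
    (hsmall : ∀ i : ℕ, i ≤ t → ∀ j : Fin N,
      |ε (n + i) j| < 1 / (1 + ∑ i : Fin t, |(c i : ℝ)|)) :
    ε (n + t) = (∑ i : Fin t, (c i : ℝ) • ε (n + (i : ℕ))) ∧
    K (n + t) = (∑ i : Fin t, c i • K (n + (i : ℕ))) := by
  set A := M.map (Int.cast : ℤ → ℝ) with hA
  set S : ℝ := ∑ i : Fin t, |(c i : ℝ)| with hS
  have hS0 : 0 ≤ S := Finset.sum_nonneg fun i _ => abs_nonneg _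
  have hS1 : (0:ℝ) < 1 + S := by linarith
  set δ : ℝ := 1 / (1 + S) with hδ
  have hδS : δ * (1 + S) = 1 := by
    rw [hδ, one_div, inv_mul_cancel₀ hS1.ne']
  have hp' : A ^ t = ∑ i : Fin t, (c i : ℝ) • A ^ (i : ℕ) := by
    have hpow : ∀ k : ℕ, A ^ k = (M ^ k).map (Int.cast : ℤ → ℝ) := by
      intro k
      have : (Int.cast : ℤ → ℝ) = ⇑(Int.castRingHom ℝ) := rfl
      rw [hA, this, ← RingHom.mapMatrix_apply, ← map_pow, RingHom.mapMatrix_apply]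
    rw [hpow t, hp]
    ext a b
    simp only [Matrix.map_apply, Matrix.sum_apply, Matrix.smul_apply, smul_eq_mul, hpow]
    push_cast
    ring
  have hmv : ∀ m : ℕ, (A ^ m).mulVec w = ε m + fun i => ((K m i : ℝ)) := by
    intro m
    rw [hε m]
    funext j
    simp
  have key : ∀ j : Fin N,
      ε (n + t) j + (K (n + t) j : ℝ)
        = (∑ i : Fin t, (c i : ℝ) * ε (n + (i:ℕ)) j)
          + ∑ i : Fin t, (c i : ℝ) * (K (n + (i:ℕ)) j : ℝ) := by
    intro j
    have h1 : (A ^ (n + t)).mulVec w = ∑ i : Fin t, (c i : ℝ) • (A ^ (n + (i:ℕ))).mulVec w := by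
      have hmat : A ^ (n + t) = ∑ i : Fin t, (c i : ℝ) • A ^ (n + (i : ℕ)) := by
        rw [pow_add, hp', Finset.mul_sum]
        congr 1
        funext i
        rw [Matrix.mul_smul, ← pow_add]
      rw [hmat, sum_mulVec']
      congr 1
      funext i
      rw [Matrix.smul_mulVec]
    have h2 := congrFun h1 j
    simp only [hmv, Finset.sum_apply, Pi.smul_apply, Pi.add_apply, smul_eq_mul,
      mul_add] at h2
    rw [Finset.sum_add_distrib] at h2
    exact h2
  have hzero : ∀ j : Fin N,
      ((∑ i : Fin t, c i * K (n + (i:ℕ)) j) - K (n + t) j : ℤ) = 0 := by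
    intro j
    have hcast : (((∑ i : Fin t, c i * K (n + (i:ℕ)) j) - K (n + t) j : ℤ) : ℝ)
        = ε (n + t) j - ∑ i : Fin t, (c i : ℝ) * ε (n + (i:ℕ)) j := by
      push_cast
      linarith [key j]
    have hb : |ε (n + t) j - ∑ i : Fin t, (c i : ℝ) * ε (n + (i:ℕ)) j| < 1 := by
      have h1 : |ε (n + t) j| < δ := hsmall t le_rfl j
      have h2 : |∑ i : Fin t, (c i : ℝ) * ε (n + (i:ℕ)) j| ≤ S * δ := by
        calc |∑ i : Fin t, (c i : ℝ) * ε (n + (i:ℕ)) j|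
            ≤ ∑ i : Fin t, |(c i : ℝ) * ε (n + (i:ℕ)) j| := Finset.abs_sum_le_sum_abs _ _
          _ ≤ ∑ i : Fin t, |(c i : ℝ)| * δ := by
              apply Finset.sum_le_sum
              intro i _
              rw [abs_mul]
              exact mul_le_mul_of_nonneg_left
                (le_of_lt (hsmall i (le_of_lt i.isLt) j)) (abs_nonneg _)
          _ = S * δ := by rw [hS, Finset.sum_mul]
      calc |ε (n + t) j - ∑ i : Fin t, (c i : ℝ) * ε (n + (i:ℕ)) j|
          ≤ |ε (n + t) j| + |∑ i : Fin t, (c i : ℝ) * ε (n + (i:ℕ)) j| := abs_sub _ _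
        _ < δ + S * δ := by linarith
        _ = 1 := by rw [← hδS]; ring
    rw [← hcast] at hb
    have : |((∑ i : Fin t, c i * K (n + (i:ℕ)) j) - K (n + t) j : ℤ)| < 1 := by
      exact_mod_cast hb
    rw [abs_lt] at this
    omega
  constructor
  · funext j
    have h0 := hzero j
    have h0' : ((∑ i : Fin t, c i * K (n + (i:ℕ)) j : ℤ) : ℝ) = (K (n + t) j : ℝ) := by
      exact_mod_cast congrArg (Int.cast : ℤ → ℝ) (sub_eq_zero.mp h0)
    push_cast at h0'
    have hk := key j
    simp only [Finset.sum_apply, Pi.smul_apply, smul_eq_mul]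
    linarith
  · funext j
    have h0 := hzero j
    simp only [Finset.sum_apply, Pi.smul_apply, smul_eq_mul]
    omega
end

section
/- Let p(X) = X^t − c_{t−1}X^{t−1} − ⋯ − c_1 X − c_0 ∈ ℤ[X] be monic of degree t ≥ 1 with companion matrix 𝔠_p, and let λ ∈ ℂ be a root of p with |λ| > 1. Let e*_λ ∈ ℂ^t be the vector with (e*_λ)_i = Σ_{j=0}^{i−1} c_j λ^{t−1−i+j} for 1 ≤ i ≤ t−1 and (e*_λ)_t = λ^{t−1}. Then there exists a constant c > 0, depending only on p and λ, with the following property: for every real H ≥ 1, every u ∈ ℝ^t with u·e*_λ = 0, every k ∈ ℤ^t with ‖k‖_∞ ≤ H and k·e*_λ ≠ 0, and every integer m ≥ 0, one has ‖𝔠_p^m (u − k)‖_∞ ≥ c · H^{−(t−1)} · |λ|^m. In particular, if 0 < δ ≤ 1/2 and ‖𝔠_p^m (u − k)‖_∞ < δ for all 0 ≤ m ≤ M, then M ≤ (log(δ/c) + (t−1) log H)/log|λ|. -/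
open MeasureTheory Real Complex Finset Matrix Polynomial IntermediateField

/-- The companion matrix (over `ℝ`, with integer coefficients) of the monic polynomial
`p(X) = X^t − c_{t−1}X^{t−1} − ⋯ − c_1 X − c_0`: ones on the superdiagonal, last row
`(c_0, c_1, …, c_{t−1})`, zeros elsewhere. -/
noncomputable def companionR {t : ℕ} (c : Fin t → ℤ) : Matrix (Fin t) (Fin t) ℝ :=
  fun i j => if (i : ℕ) = t - 1 then (c j : ℝ) else if (j : ℕ) = (i : ℕ) + 1 then 1 else 0

/-- The left-eigenvector `e*_λ ∈ ℂ^t`: in 1-based notation,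
`(e*_λ)_i = Σ_{j=0}^{i−1} c_j λ^{t−1−i+j}` for `1 ≤ i ≤ t−1` and `(e*_λ)_t = λ^{t−1}`. -/
noncomputable def estarZ {t : ℕ} (c : Fin t → ℤ) (lam : ℂ) : Fin t → ℂ :=
  fun i => if (i : ℕ) = t - 1 then lam ^ (t - 1)
    else ∑ j : Fin t,
      if (j : ℕ) ≤ (i : ℕ) then (c j : ℂ) * lam ^ (t - 2 - (i : ℕ) + (j : ℕ)) else 0


noncomputable def estarG {t : ℕ} (c : Fin t → ℤ) {R : Type*} [CommRing R] (z : R) : Fin t → R :=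
  fun i => if (i : ℕ) = t - 1 then z ^ (t - 1)
    else ∑ j : Fin t,
      if (j : ℕ) ≤ (i : ℕ) then (c j : R) * z ^ (t - 2 - (i : ℕ) + (j : ℕ)) else 0

lemma estarG_map {t : ℕ} (c : Fin t → ℤ) {R S : Type*} [CommRing R] [CommRing S]
    {F : Type*} [FunLike F R S] [RingHomClass F R S]
    (f : F) (z : R) (i : Fin t) : f (estarG c z i) = estarG c (f z) i := by
  simp only [estarG, apply_ite f, _root_.map_pow, _root_.map_sum]
  congr 1
  congr 1
  ext j
  split <;> simp

lemma eigen_col {t : ℕ} (ht : 1 ≤ t) (c : Fin t → ℤ) {R : Type*} [CommRing R] (z : R)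
    (hroot : z ^ t = ∑ j : Fin t, (c j : R) * z ^ (j : ℕ)) (j : Fin t) :
    ∑ i : Fin t, (if (i : ℕ) = t - 1 then (c j : R) else if (j : ℕ) = (i : ℕ) + 1 then 1 else 0)
        * estarG c z i = z * estarG c z j := by
  have hjt : (j : ℕ) < t := j.isLt
  obtain ⟨L, hLval⟩ : ∃ L : Fin t, (L : ℕ) = t - 1 := ⟨⟨t - 1, by omega⟩, rfl⟩
  rw [← Finset.add_sum_erase _ _ (mem_univ L)]
  have h1 : (if (L : ℕ) = t - 1 then (c j : R) else if (j : ℕ) = (L : ℕ) + 1 then 1 else 0)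
      * estarG c z L = (c j : R) * z ^ (t - 1) := by
    simp [estarG, hLval]
  rw [h1]
  rcases Nat.eq_zero_or_pos (j : ℕ) with hj0 | hjpos
  · -- j = 0
    have hzero : (∑ i ∈ univ.erase L,
        (if (i : ℕ) = t - 1 then (c j : R) else if (j : ℕ) = (i : ℕ) + 1 then 1 else 0)
          * estarG c z i) = 0 := by
      apply Finset.sum_eq_zero
      intro i hi
      have hine : i ≠ L := (Finset.mem_erase.mp hi).1
      have h2 : (i : ℕ) ≠ t - 1 := fun h => hine (Fin.ext (h.trans hLval.symm))
      rw [if_neg h2, if_neg (by omega), zero_mul]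
    rw [hzero, add_zero]
    rcases Nat.lt_or_ge 1 t with ht2 | ht1
    · -- t ≥ 2
      have hjL : (j : ℕ) ≠ t - 1 := by omega
      have he : estarG c z j = (c ⟨0, by omega⟩ : R) * z ^ (t - 2) := by
        rw [estarG, if_neg hjL, Finset.sum_eq_single (⟨0, by omega⟩ : Fin t)]
        · rw [if_pos (by simp [hj0])]
          congr 1
          simp [hj0]
        · intro b _ hb
          have hb0 : (b : ℕ) ≠ 0 := fun h => hb (Fin.ext h)
          rw [if_neg (by omega)]
        · simp
      rw [he]
      have hj' : j = ⟨0, by omega⟩ := Fin.ext hj0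
      rw [hj']
      have hz : z * z ^ (t - 2) = z ^ (t - 1) := by
        rw [← pow_succ']
        congr 1
        congr 1
        omega
      rw [mul_comm ((c ⟨0, by omega⟩ : R)) (z ^ (t-2)), ← mul_assoc, hz, mul_comm]
    · -- t = 1
      have ht1' : t = 1 := by omega
      have he : estarG c z j = 1 := by
        rw [estarG, if_pos (by omega), show t - 1 = 0 by omega, pow_zero]
      rw [he, mul_one, show t - 1 = 0 by omega, pow_zero, mul_one]
      have hr : z ^ t = (c j : R) * z ^ (j : ℕ) := by
        rw [hroot, Finset.sum_eq_single j]
        · intro b _ hb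
          exfalso; exact hb (Fin.ext (by omega))
        · simp
      have hzt : z ^ t = z := by rw [ht1', pow_one]
      rw [hzt, hj0, pow_zero, mul_one] at hr
      exact hr.symm
  · -- j ≥ 1, so t ≥ 2
    have ht2 : 2 ≤ t := by omega
    obtain ⟨i₀, hi₀val⟩ : ∃ i : Fin t, (i : ℕ) = (j : ℕ) - 1 := ⟨⟨(j : ℕ) - 1, by omega⟩, rfl⟩
    have hi₀L : i₀ ≠ L := by
      intro h
      have h' := congrArg Fin.val h
      rw [hi₀val, hLval] at h'
      omega
    have hsum : (∑ i ∈ univ.erase L,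
        (if (i : ℕ) = t - 1 then (c j : R) else if (j : ℕ) = (i : ℕ) + 1 then 1 else 0)
          * estarG c z i) = estarG c z i₀ := by
      rw [Finset.sum_eq_single_of_mem i₀ (Finset.mem_erase.mpr ⟨hi₀L, mem_univ _⟩)]
      · rw [if_neg (by rw [hi₀val]; omega), if_pos (by rw [hi₀val]; omega), one_mul]
      · intro b hb hbne
        have hbL : b ≠ L := (Finset.mem_erase.mp hb).1
        have hb1 : (b : ℕ) ≠ t - 1 := fun h => hbL (Fin.ext (h.trans hLval.symm))
        rw [if_neg hb1, if_neg (fun h => hbne (Fin.ext (by omega))), zero_mul]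
    rw [hsum]
    rcases Nat.lt_or_ge (j : ℕ) (t - 1) with hjmid | hjtop
    · -- 1 ≤ j < t-1
      have hT : z * estarG c z j
          = ∑ l : Fin t, (if (l : ℕ) ≤ (j : ℕ) then (c l : R) * z ^ (t - 1 - (j : ℕ) + (l : ℕ)) else 0) := by
        rw [estarG, if_neg (by omega), Finset.mul_sum]
        apply Finset.sum_congr rfl
        intro l _
        rw [mul_ite, mul_zero]
        by_cases hle : (l : ℕ) ≤ (j : ℕ)
        · rw [if_pos hle, if_pos hle, ← mul_assoc, mul_comm z ((c l : R)), mul_assoc, ← pow_succ']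
          congr 1
          congr 1
          omega
        · rw [if_neg hle, if_neg hle]
      rw [hT, ← Finset.add_sum_erase _ _ (mem_univ j), if_pos (le_refl _),
        show t - 1 - (j : ℕ) + (j : ℕ) = t - 1 by omega]
      congr 1
      -- remains: estarG c z i₀ = ∑ l in erase j, F l
      have hGj : (if (j : ℕ) ≤ (i₀ : ℕ) then (c j : R) * z ^ (t - 2 - (i₀ : ℕ) + (j : ℕ)) else 0) = 0 := by
        rw [if_neg (by rw [hi₀val]; omega)]
      calc estarG c z i₀
          = ∑ l : Fin t, (if (l : ℕ) ≤ (i₀ : ℕ) then (c l : R) * z ^ (t - 2 - (i₀ : ℕ) + (l : ℕ)) else 0) := by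
            rw [estarG, if_neg (by rw [hi₀val]; omega)]
        _ = ∑ l ∈ univ.erase j, (if (l : ℕ) ≤ (i₀ : ℕ) then (c l : R) * z ^ (t - 2 - (i₀ : ℕ) + (l : ℕ)) else 0) :=
            (Finset.sum_erase (a := j) _ hGj).symm
        _ = ∑ l ∈ univ.erase j, (if (l : ℕ) ≤ (j : ℕ) then (c l : R) * z ^ (t - 1 - (j : ℕ) + (l : ℕ)) else 0) := by
            apply Finset.sum_congr rfl
            intro l hl
            have hlj : (l : ℕ) ≠ (j : ℕ) := fun h => (Finset.mem_erase.mp hl).1 (Fin.ext h)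
            have hiv := hi₀val
            by_cases hle : (l : ℕ) ≤ (i₀ : ℕ)
            · rw [if_pos hle, if_pos (by omega)]
              congr 1
              congr 1
              omega
            · rw [if_neg hle, if_neg (by omega)]
    · -- j = t-1
      have hjeq : (j : ℕ) = t - 1 := by omega
      have hjL : j = L := Fin.ext (by rw [hjeq, hLval])
      have hR : z * estarG c z j = ∑ l : Fin t, (c l : R) * z ^ (l : ℕ) := by
        rw [estarG, if_pos hjeq, ← pow_succ', show (t - 1) + 1 = t by omega, hroot]
      rw [hR, ← Finset.add_sum_erase _ _ (mem_univ L)]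
      congr 1
      · rw [hjL, hLval]
      · have hGL : (if (L : ℕ) ≤ (i₀ : ℕ) then (c L : R) * z ^ (t - 2 - (i₀ : ℕ) + (L : ℕ)) else 0) = 0 := by
          rw [if_neg (by rw [hi₀val, hLval]; omega)]
        calc estarG c z i₀
            = ∑ l : Fin t, (if (l : ℕ) ≤ (i₀ : ℕ) then (c l : R) * z ^ (t - 2 - (i₀ : ℕ) + (l : ℕ)) else 0) := by
              rw [estarG, if_neg (by rw [hi₀val]; omega)]
          _ = ∑ l ∈ univ.erase L, (if (l : ℕ) ≤ (i₀ : ℕ) then (c l : R) * z ^ (t - 2 - (i₀ : ℕ) + (l : ℕ)) else 0) :=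
              (Finset.sum_erase (a := L) _ hGL).symm
          _ = ∑ l ∈ univ.erase L, (c l : R) * z ^ (l : ℕ) := by
              apply Finset.sum_congr rfl
              intro l hl
              have hlL : (l : ℕ) ≠ t - 1 :=
                fun h => (Finset.mem_erase.mp hl).1 (Fin.ext (h.trans hLval.symm))
              have hlt : (l : ℕ) < t := l.isLt
              rw [if_pos (by rw [hi₀val]; omega)]
              congr 1
              congr 1
              rw [hi₀val]
              omega

open Matrix

lemma step {t : ℕ} (ht : 1 ≤ t) (c : Fin t → ℤ) (lam : ℂ)
    (hroot : lam ^ t = ∑ j : Fin t, (c j : ℂ) * lam ^ (j : ℕ)) (w : Fin t → ℝ) :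
    ∑ i : Fin t, (((companionR c).mulVec w i : ℝ) : ℂ) * estarG c lam i
      = lam * ∑ i : Fin t, ((w i : ℝ) : ℂ) * estarG c lam i := by
  have hentry : ∀ i j : Fin t, ((companionR c i j : ℝ) : ℂ)
      = (if (i : ℕ) = t - 1 then (c j : ℂ) else if (j : ℕ) = (i : ℕ) + 1 then 1 else 0) := by
    intro i j
    rw [companionR]
    split
    · simp
    · split <;> simp
  calc ∑ i : Fin t, (((companionR c).mulVec w i : ℝ) : ℂ) * estarG c lam i
      = ∑ i : Fin t, (∑ j : Fin t, ((companionR c i j : ℝ) : ℂ) * (w j : ℂ)) * estarG c lam i := by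
        apply Finset.sum_congr rfl
        intro i _
        congr 1
        rw [Matrix.mulVec, dotProduct]
        push_cast
        rfl
    _ = ∑ j : Fin t, (w j : ℂ) *
          ∑ i : Fin t, (if (i : ℕ) = t - 1 then (c j : ℂ) else if (j : ℕ) = (i : ℕ) + 1 then 1 else 0)
            * estarG c lam i := by
        simp_rw [Finset.sum_mul, hentry]
        rw [Finset.sum_comm]
        apply Finset.sum_congr rfl
        intro j _
        rw [Finset.mul_sum]
        apply Finset.sum_congr rfl
        intro i _
        ring
    _ = ∑ j : Fin t, (w j : ℂ) * (lam * estarG c lam j) := by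
        apply Finset.sum_congr rfl
        intro j _
        rw [eigen_col ht c lam hroot j]
    _ = lam * ∑ i : Fin t, ((w i : ℝ) : ℂ) * estarG c lam i := by
        rw [Finset.mul_sum]
        apply Finset.sum_congr rfl
        intro i _
        ring

lemma iter {t : ℕ} (ht : 1 ≤ t) (c : Fin t → ℤ) (lam : ℂ)
    (hroot : lam ^ t = ∑ j : Fin t, (c j : ℂ) * lam ^ (j : ℕ)) (w : Fin t → ℝ) (m : ℕ) :
    ∑ i : Fin t, (((companionR c ^ m).mulVec w i : ℝ) : ℂ) * estarG c lam i
      = lam ^ m * ∑ i : Fin t, ((w i : ℝ) : ℂ) * estarG c lam i := by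
  induction m with
  | zero => simp [Matrix.one_mulVec]
  | succ n ih =>
      have h1 : (companionR c ^ (n + 1)).mulVec w
          = (companionR c).mulVec ((companionR c ^ n).mulVec w) := by
        rw [pow_succ', Matrix.mulVec_mulVec]
      rw [h1, step ht c lam hroot, ih, pow_succ']
      ring

lemma root_bound {t : ℕ} (ht : 1 ≤ t) (c : Fin t → ℤ) (z : ℂ)
    (hz : z ^ t = ∑ j : Fin t, (c j : ℂ) * z ^ (j : ℕ)) :
    ‖z‖ ≤ max 1 (∑ j : Fin t, |(c j : ℝ)|) := by
  by_contra hgt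
  push_neg at hgt
  have h1 : (1:ℝ) < ‖z‖ := lt_of_le_of_lt (le_max_left _ _) hgt
  have hA : (∑ j : Fin t, |(c j:ℝ)|) < ‖z‖ := lt_of_le_of_lt (le_max_right _ _) hgt
  have hub : ‖z‖ ^ t ≤ (∑ j : Fin t, |(c j:ℝ)|) * ‖z‖ ^ (t-1) := by
    rw [← norm_pow, hz]
    calc ‖∑ j : Fin t, (c j:ℂ) * z^(j:ℕ)‖
        ≤ ∑ j : Fin t, ‖(c j:ℂ) * z^(j:ℕ)‖ := norm_sum_le _ _
      _ ≤ ∑ j : Fin t, |(c j:ℝ)| * ‖z‖ ^ (t-1) := by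
          apply Finset.sum_le_sum
          intro j _
          rw [norm_mul, norm_pow]
          rw [Complex.norm_intCast]
          apply mul_le_mul_of_nonneg_left _ (abs_nonneg _)
          exact pow_le_pow_right₀ (le_of_lt h1) (by omega)
      _ = (∑ j : Fin t, |(c j:ℝ)|) * ‖z‖ ^ (t-1) := (Finset.sum_mul _ _ _).symm
  have hzp : (0:ℝ) < ‖z‖ ^ (t-1) := pow_pos (by linarith) _
  rw [show ‖z‖ ^ t = ‖z‖ ^ (t-1) * ‖z‖ by
    rw [← pow_succ]; congr 1; omega] at hub
  have := le_of_mul_le_mul_left (by linarith [hub] : ‖z‖ ^ (t-1) * ‖z‖ ≤ ‖z‖ ^ (t-1) * (∑ j : Fin t, |(c j:ℝ)|)) hzp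
  linarith

lemma estarG_abs_le {t : ℕ} (ht : 1 ≤ t) (c : Fin t → ℤ) (z : ℂ)
    (hz : ‖z‖ ≤ max 1 (∑ j : Fin t, |(c j : ℝ)|)) (i : Fin t) :
    ‖estarG c z i‖
      ≤ ((∑ j : Fin t, |(c j : ℝ)|) + 1) * (max 1 (∑ j : Fin t, |(c j : ℝ)|)) ^ (t-1) := by
  set A := ∑ j : Fin t, |(c j : ℝ)| with hA
  have hA0 : 0 ≤ A := Finset.sum_nonneg fun j _ => abs_nonneg _
  set B := max 1 A with hB
  have hB1 : (1:ℝ) ≤ B := le_max_left _ _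
  have hpow : ∀ n : ℕ, n ≤ t - 1 → ‖z‖ ^ n ≤ B ^ (t-1) := by
    intro n hn
    calc ‖z‖ ^ n ≤ B ^ n := pow_le_pow_left₀ (norm_nonneg z) hz n
      _ ≤ B ^ (t-1) := pow_le_pow_right₀ hB1 hn
  rw [estarG]
  split
  · calc ‖z ^ (t-1)‖ = ‖z‖ ^ (t-1) := norm_pow _ _
      _ ≤ B ^ (t-1) := hpow _ le_rfl
      _ ≤ (A + 1) * B ^ (t-1) := by nlinarith [pow_pos (lt_of_lt_of_le one_pos hB1) (t-1)]
  · calc ‖∑ j : Fin t, if (j : ℕ) ≤ (i : ℕ) then (c j : ℂ) * z ^ (t - 2 - (i : ℕ) + (j : ℕ)) else 0‖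
        ≤ ∑ j : Fin t, ‖if (j : ℕ) ≤ (i : ℕ) then (c j : ℂ) * z ^ (t - 2 - (i : ℕ) + (j : ℕ)) else 0‖ :=
          norm_sum_le _ _
      _ ≤ ∑ j : Fin t, |(c j : ℝ)| * B ^ (t-1) := by
          apply Finset.sum_le_sum
          intro j _
          split
          · rw [norm_mul, norm_pow]
            rw [Complex.norm_intCast]
            exact mul_le_mul_of_nonneg_left (hpow _ (by omega)) (abs_nonneg _)
          · rw [norm_zero]
            positivity
      _ = A * B ^ (t-1) := (Finset.sum_mul _ _ _).symm
      _ ≤ (A + 1) * B ^ (t-1) := by nlinarith [pow_pos (lt_of_lt_of_le one_pos hB1) (t-1)]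

set_option maxHeartbeats 1000000 in
lemma liouville {t : ℕ} (ht : 1 ≤ t) (c : Fin t → ℤ) (lam : ℂ)
    (hroot : lam ^ t = ∑ j : Fin t, (c j : ℂ) * lam ^ (j : ℕ))
    (H : ℝ) (hH : 1 ≤ H) (k : Fin t → ℤ) (hk : ∀ i, |(k i : ℝ)| ≤ H)
    (hne : (∑ i : Fin t, (k i : ℂ) * estarG c lam i) ≠ 0) :
    1 ≤ ((t * ((∑ j : Fin t, |(c j : ℝ)|) + 1) * (max 1 (∑ j : Fin t, |(c j : ℝ)|)) ^ (t-1)) * H) ^ (t-1)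
        * ‖∑ i : Fin t, (k i : ℂ) * estarG c lam i‖ := by
  classical
  set A := ∑ j : Fin t, |(c j : ℝ)| with hA
  have hA0 : 0 ≤ A := Finset.sum_nonneg fun j _ => abs_nonneg _
  set B := max 1 A with hB
  have hB1 : (1:ℝ) ≤ B := le_max_left _ _
  set C₁ : ℝ := t * (A + 1) * B ^ (t-1) with hC₁
  have hC₁1 : (1:ℝ) ≤ C₁ := by
    have h1 : (1:ℝ) ≤ (t:ℝ) := by exact_mod_cast ht
    have h2 : (1:ℝ) ≤ A + 1 := by linarith
    have h3 : (1:ℝ) ≤ B ^ (t-1) := one_le_pow₀ hB1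
    have h12 : (1:ℝ)*1 ≤ (t:ℝ)*(A+1) := mul_le_mul h1 h2 zero_le_one (by linarith)
    have h123 : ((1:ℝ)*1)*1 ≤ ((t:ℝ)*(A+1))*B^(t-1) := mul_le_mul h12 h3 zero_le_one (by nlinarith)
    calc (1:ℝ) = 1*1*1 := by ring
      _ ≤ _ := h123
  have hCH1 : (1:ℝ) ≤ C₁ * H := by
    have := mul_le_mul hC₁1 hH zero_le_one (le_trans zero_le_one hC₁1)
    linarith
  -- the integer polynomial
  set Q : ℤ[X] := ∑ j : Fin t, Polynomial.C (c j) * Polynomial.X ^ (j : ℕ) with hQ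
  have hQdeg : Q.degree ≤ ((t - 1 : ℕ) : WithBot ℕ) := by
    apply (Polynomial.degree_sum_le _ _).trans
    apply Finset.sup_le
    intro j _
    apply (Polynomial.degree_C_mul_X_pow_le _ _).trans
    have hj : (j:ℕ) ≤ t - 1 := by omega
    exact_mod_cast hj
  set P₀ : ℤ[X] := Polynomial.X ^ t - Q with hP₀
  have hmonic : P₀.Monic := by
    rw [hP₀, show t = (t-1)+1 by omega]
    apply Polynomial.monic_X_pow_sub
    apply lt_of_le_of_lt hQdeg
    exact_mod_cast Nat.cast_lt.mpr (Nat.lt_succ_self (t-1))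
  have haevalC : ∀ (z : ℂ), Polynomial.aeval z P₀ = z ^ t - ∑ j : Fin t, (c j : ℂ) * z ^ (j : ℕ) := by
    intro z
    rw [hP₀, _root_.map_sub, _root_.map_pow, Polynomial.aeval_X, hQ, _root_.map_sum]
    congr 1
    apply Finset.sum_congr rfl
    intro j _
    rw [_root_.map_mul, Polynomial.aeval_C, _root_.map_pow, Polynomial.aeval_X]
    rfl
  have hint : IsIntegral ℤ lam := ⟨P₀, hmonic, by
    rw [← Polynomial.aeval_def, haevalC, hroot, sub_self]⟩
  have hintQ : IsIntegral ℚ lam := hint.tower_top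
  haveI hfd : FiniteDimensional ℚ ℚ⟮lam⟯ := IntermediateField.adjoin.finiteDimensional hintQ
  set gen : ℚ⟮lam⟯ := IntermediateField.AdjoinSimple.gen ℚ lam with hgendef
  have hgen : algebraMap ℚ⟮lam⟯ ℂ gen = lam := IntermediateField.AdjoinSimple.algebraMap_gen ℚ lam
  have hinj : Function.Injective (algebraMap ℚ⟮lam⟯ ℂ) := (algebraMap ℚ⟮lam⟯ ℂ).injective
  have hgenroot : gen ^ t = ∑ j : Fin t, (c j : ℚ⟮lam⟯) * gen ^ (j : ℕ) := by
    apply hinj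
    rw [_root_.map_pow, hgen, _root_.map_sum, hroot]
    apply Finset.sum_congr rfl
    intro j _
    rw [_root_.map_mul, _root_.map_pow, hgen, _root_.map_intCast]
  set x : ℚ⟮lam⟯ := ∑ i : Fin t, (k i : ℚ⟮lam⟯) * estarG c gen i with hx
  have hxmap : algebraMap ℚ⟮lam⟯ ℂ x = ∑ i : Fin t, (k i : ℂ) * estarG c lam i := by
    rw [hx, _root_.map_sum]
    apply Finset.sum_congr rfl
    intro i _
    rw [_root_.map_mul, _root_.map_intCast, estarG_map c (algebraMap ℚ⟮lam⟯ ℂ), hgen]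
  have hx0 : x ≠ 0 := by
    intro h
    exact hne (by rw [← hxmap, h, _root_.map_zero])
  have hgenint : IsIntegral ℤ gen := ⟨P₀, hmonic, by
    have h := congrArg (algebraMap ℚ⟮lam⟯ ℂ) (rfl : Polynomial.eval₂ (algebraMap ℤ ℚ⟮lam⟯) gen P₀ = Polynomial.eval₂ (algebraMap ℤ ℚ⟮lam⟯) gen P₀)
    apply hinj
    rw [_root_.map_zero, ← Polynomial.aeval_def, ← Polynomial.aeval_algebraMap_apply, hgen, haevalC, hroot, sub_self]⟩
  have hpowint : ∀ n : ℕ, IsIntegral ℤ (gen ^ n) := fun n => hgenint.pow n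
  have hcastint : ∀ n : ℤ, IsIntegral ℤ ((n : ℚ⟮lam⟯)) := by
    intro n
    have h := isIntegral_algebraMap (R := ℤ) (A := ℚ⟮lam⟯) (x := n)
    rwa [eq_intCast (algebraMap ℤ ℚ⟮lam⟯) n] at h
  have hxint : IsIntegral ℤ x := by
    rw [hx]
    apply IsIntegral.sum
    intro i _
    apply IsIntegral.mul (hcastint _)
    rw [estarG]
    split
    · exact hpowint _
    · apply IsIntegral.sum
      intro j _
      split
      · exact IsIntegral.mul (hcastint _) (hpowint _)
      · exact isIntegral_zero
  -- the norm is a nonzero integer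
  set N : ℚ := Algebra.norm ℚ x with hN
  have hNint : IsIntegral ℤ N := Algebra.isIntegral_norm ℚ hxint
  obtain ⟨n, hn⟩ := IsIntegrallyClosed.isIntegral_iff.mp hNint
  have hN0 : N ≠ 0 := by
    rw [hN]
    exact (Algebra.norm_ne_zero_iff).mpr hx0
  have hn0 : n ≠ 0 := by
    intro h
    rw [h] at hn
    exact hN0 (by rw [← hn]; simp)
  have habs1 : 1 ≤ ‖algebraMap ℚ ℂ N‖ := by
    rw [← hn]
    have : algebraMap ℚ ℂ (algebraMap ℤ ℚ n) = (n : ℂ) := by push_cast; simp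
    rw [this, Complex.norm_intCast]
    exact_mod_cast Int.one_le_abs hn0
  have hprod : algebraMap ℚ ℂ N = ∏ σ : ℚ⟮lam⟯ →ₐ[ℚ] ℂ, σ x :=
    Algebra.norm_eq_prod_embeddings ℚ ℂ x
  -- bound each embedding
  have hbound : ∀ σ : ℚ⟮lam⟯ →ₐ[ℚ] ℂ, ‖σ x‖ ≤ C₁ * H := by
    intro σ
    have hz : (σ gen) ^ t = ∑ j : Fin t, (c j : ℂ) * (σ gen) ^ (j : ℕ) := by
      have := congrArg σ hgenroot
      rw [_root_.map_pow, _root_.map_sum] at this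
      rw [this]
      apply Finset.sum_congr rfl
      intro j _
      rw [_root_.map_mul, _root_.map_pow, _root_.map_intCast]
    have hzB : ‖σ gen‖ ≤ B := root_bound ht c _ hz
    have hσx : σ x = ∑ i : Fin t, (k i : ℂ) * estarG c (σ gen) i := by
      rw [hx, _root_.map_sum]
      apply Finset.sum_congr rfl
      intro i _
      rw [_root_.map_mul, _root_.map_intCast, estarG_map c σ]
    rw [hσx]
    calc ‖∑ i : Fin t, (k i : ℂ) * estarG c (σ gen) i‖
        ≤ ∑ i : Fin t, ‖(k i : ℂ) * estarG c (σ gen) i‖ := norm_sum_le _ _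
      _ ≤ ∑ i : Fin t, H * ((A + 1) * B ^ (t-1)) := by
          apply Finset.sum_le_sum
          intro i _
          rw [norm_mul, Complex.norm_intCast]
          exact mul_le_mul (hk i) (estarG_abs_le ht c _ hzB i) (norm_nonneg _) (by linarith)
      _ = t * (A + 1) * B ^ (t-1) * H := by
          rw [Finset.sum_const, card_univ, Fintype.card_fin]
          ring
      _ = C₁ * H := by rw [hC₁]
  -- count embeddings
  have hcard : Fintype.card (ℚ⟮lam⟯ →ₐ[ℚ] ℂ) ≤ t := by
    rw [AlgHom.card]
    rw [IntermediateField.adjoin.finrank hintQ]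
    have hdvd : minpoly ℚ lam ∣ P₀.map (algebraMap ℤ ℚ) := by
      apply minpoly.dvd
      rw [Polynomial.aeval_map_algebraMap, haevalC, hroot, sub_self]
    have hP₀ne : P₀.map (algebraMap ℤ ℚ) ≠ 0 := (hmonic.map _).ne_zero
    have := Polynomial.natDegree_le_of_dvd hdvd hP₀ne
    have hQnat : Q.natDegree ≤ t - 1 := Polynomial.natDegree_le_iff_degree_le.mpr hQdeg
    have hdeg : (P₀.map (algebraMap ℤ ℚ)).natDegree = t := by
      rw [hmonic.natDegree_map, hP₀,
        Polynomial.natDegree_sub_eq_left_of_natDegree_lt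
          (by rw [Polynomial.natDegree_X_pow]; omega),
        Polynomial.natDegree_X_pow]
    omega
  -- assemble
  have hv : ∃ v : ℚ⟮lam⟯ →ₐ[ℚ] ℂ, ∀ y : ℚ⟮lam⟯, v y = algebraMap ℚ⟮lam⟯ ℂ y :=
    ⟨IsScalarTower.toAlgHom ℚ ℚ⟮lam⟯ ℂ, fun y => rfl⟩
  obtain ⟨v, hvdef⟩ := hv
  have hsplit : (∏ σ : ℚ⟮lam⟯ →ₐ[ℚ] ℂ, ‖σ x‖)
      = ‖v x‖ * ∏ σ ∈ Finset.univ.erase v, ‖σ x‖ :=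
    (Finset.mul_prod_erase _ _ (Finset.mem_univ v)).symm
  have habsprod : 1 ≤ ‖v x‖ * ∏ σ ∈ Finset.univ.erase v, ‖σ x‖ := by
    rw [← hsplit, ← norm_prod, ← hprod]
    exact habs1
  have hprodle : (∏ σ ∈ Finset.univ.erase v, ‖σ x‖) ≤ (C₁ * H) ^ (t-1) := by
    calc (∏ σ ∈ Finset.univ.erase v, ‖σ x‖)
        ≤ ∏ σ ∈ Finset.univ.erase v, (C₁ * H) :=
          Finset.prod_le_prod (fun σ _ => norm_nonneg _) (fun σ _ => hbound σ)
      _ = (C₁ * H) ^ (Finset.univ.erase v).card := Finset.prod_const _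
      _ ≤ (C₁ * H) ^ (t-1) := by
          apply pow_le_pow_right₀ hCH1
          rw [Finset.card_erase_of_mem (Finset.mem_univ v), Finset.card_univ]
          omega
  have hvx : ‖v x‖ = ‖∑ i : Fin t, (k i : ℂ) * estarG c lam i‖ := by
    rw [hvdef, hxmap]
  have habsnn : 0 ≤ ‖v x‖ := norm_nonneg _
  have hchain : 1 ≤ ‖v x‖ * (C₁ * H) ^ (t-1) := by
    calc (1:ℝ) ≤ ‖v x‖ * ∏ σ ∈ Finset.univ.erase v, ‖σ x‖ := habsprod
      _ ≤ ‖v x‖ * (C₁ * H) ^ (t-1) := by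
          apply mul_le_mul_of_nonneg_left hprodle habsnn
  rw [hvx] at hchain
  linarith [hchain]

set_option maxHeartbeats 1600000 in
/-- escape-of-mass estimate from the proof of Proposition 4.1: for a root
`λ` of `p ∈ ℤ[X]` with `|λ| > 1` there is `c > 0`, depending only on `p` and `λ`, such
that for every `H ≥ 1`, every `u ∈ ℝ^t` with `u·e*_λ = 0`, every `k ∈ ℤ^t` with
`‖k‖_∞ ≤ H` and `k·e*_λ ≠ 0`, and every `m ≥ 0`:
`‖𝔠_p^m (u − k)‖_∞ ≥ c H^{−(t−1)} |λ|^m`; in particular if `0 < δ ≤ 1/2` and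
`‖𝔠_p^m (u − k)‖_∞ < δ` for all `0 ≤ m ≤ M`, then
`M ≤ (log(δ/c) + (t−1) log H)/log|λ|`. (The Pi norm on `Fin t → ℝ` is the sup norm.) -/
theorem escape_of_mass {t : ℕ} (ht : 1 ≤ t) (c : Fin t → ℤ) (lam : ℂ)
    (hroot : lam ^ t = ∑ j : Fin t, (c j : ℂ) * lam ^ (j : ℕ))
    (hlam : 1 < ‖lam‖) :
    ∃ cc > 0, ∀ H : ℝ, 1 ≤ H →
      ∀ u : Fin t → ℝ, (∑ i : Fin t, (u i : ℂ) * estarZ c lam i) = 0 →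
      ∀ k : Fin t → ℤ, (∀ i, |(k i : ℝ)| ≤ H) →
      (∑ i : Fin t, (k i : ℂ) * estarZ c lam i) ≠ 0 →
      ((∀ m : ℕ,
          cc * H ^ (-((t : ℝ) - 1)) * ‖lam‖ ^ m
            ≤ ‖(companionR c ^ m).mulVec (fun i => u i - (k i : ℝ))‖) ∧
        ∀ δ : ℝ, 0 < δ → δ ≤ 1 / 2 → ∀ MM : ℕ,
          (∀ m : ℕ, m ≤ MM →
            ‖(companionR c ^ m).mulVec (fun i => u i - (k i : ℝ))‖ < δ) →
          (MM : ℝ) ≤ (Real.log (δ / cc) + ((t : ℝ) - 1) * Real.log H) /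
            Real.log (‖lam‖)) := by
  classical
  have hEZ : estarZ c lam = estarG c lam := rfl
  set A := ∑ j : Fin t, |(c j : ℝ)| with hA
  have hA0 : 0 ≤ A := Finset.sum_nonneg fun j _ => abs_nonneg _
  set B := max 1 A with hB
  have hB1 : (1:ℝ) ≤ B := le_max_left _ _
  set C₁ : ℝ := t * (A + 1) * B ^ (t-1) with hC₁
  have hC₁1 : (1:ℝ) ≤ C₁ := by
    have h1 : (1:ℝ) ≤ (t:ℝ) := by exact_mod_cast ht
    have h2 : (1:ℝ) ≤ A + 1 := by linarith
    have h3 : (1:ℝ) ≤ B ^ (t-1) := one_le_pow₀ hB1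
    have h12 : (1:ℝ)*1 ≤ (t:ℝ)*(A+1) := mul_le_mul h1 h2 zero_le_one (by linarith)
    have h123 : ((1:ℝ)*1)*1 ≤ ((t:ℝ)*(A+1))*B^(t-1) := mul_le_mul h12 h3 zero_le_one (by nlinarith)
    calc (1:ℝ) = 1*1*1 := by ring
      _ ≤ _ := h123
  set S : ℝ := ∑ i : Fin t, ‖estarZ c lam i‖ with hSdef
  have hS1 : (1:ℝ) ≤ S := by
    obtain ⟨L, hLval⟩ : ∃ L : Fin t, (L : ℕ) = t - 1 := ⟨⟨t - 1, by omega⟩, rfl⟩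
    have h1 : ‖estarZ c lam L‖ = ‖lam‖ ^ (t-1) := by
      rw [estarZ, if_pos hLval, norm_pow]
    have h2 : (1:ℝ) ≤ ‖lam‖ ^ (t-1) := one_le_pow₀ hlam.le
    have h3 : ‖estarZ c lam L‖ ≤ S :=
      Finset.single_le_sum (fun i _ => norm_nonneg _) (Finset.mem_univ L)
    rw [h1] at h3
    linarith
  have hSpos : (0:ℝ) < S := by linarith
  have hC₁pos : (0:ℝ) < C₁ ^ (t-1) := pow_pos (lt_of_lt_of_le one_pos hC₁1) _
  refine ⟨(C₁^(t-1) * S)⁻¹, inv_pos.mpr (mul_pos hC₁pos hSpos), ?_⟩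
  intro H hH u hu k hk hkne
  have hHpos : (0:ℝ) < H := lt_of_lt_of_le one_pos hH
  have hrpow : H ^ (-((t:ℝ) - 1)) = (H ^ (t-1 : ℕ))⁻¹ := by
    rw [show ((t:ℝ) - 1) = ((t-1 : ℕ) : ℝ) by
      rw [Nat.cast_sub ht]; norm_num]
    rw [← Real.rpow_natCast H (t-1), ← Real.rpow_neg hHpos.le]
  set K : ℝ := ‖∑ i : Fin t, (k i : ℂ) * estarZ c lam i‖ with hKdef
  have hKpos : (0:ℝ) < K := norm_pos_iff.mpr hkne
  have h3 := liouville ht c lam hroot H hH k hk (by rw [← hEZ]; exact hkne)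
  rw [← hEZ, ← hKdef, ← hA, ← hB, ← hC₁] at h3
  have hCHpos : (0:ℝ) < (C₁*H)^(t-1) := pow_pos (mul_pos (lt_of_lt_of_le one_pos hC₁1) hHpos) _
  have hK : ((C₁*H)^(t-1))⁻¹ ≤ K := by
    calc ((C₁*H)^(t-1))⁻¹ = ((C₁*H)^(t-1))⁻¹ * 1 := (mul_one _).symm
      _ ≤ ((C₁*H)^(t-1))⁻¹ * ((C₁*H)^(t-1) * K) :=
          mul_le_mul_of_nonneg_left h3 (le_of_lt (inv_pos.mpr hCHpos))
      _ = K := by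
          rw [← mul_assoc, inv_mul_cancel₀ (ne_of_gt hCHpos), one_mul]
  have key : ∀ m : ℕ,
      (C₁^(t-1) * S)⁻¹ * H ^ (-((t:ℝ) - 1)) * ‖lam‖ ^ m
        ≤ ‖(companionR c ^ m).mulVec (fun i => u i - (k i : ℝ))‖ := by
    intro m
    set w := (companionR c ^ m).mulVec (fun i => u i - (k i : ℝ)) with hw
    have hv : ∑ i : Fin t, ((u i - (k i : ℝ) : ℝ) : ℂ) * estarZ c lam i
        = - ∑ i : Fin t, (k i : ℂ) * estarZ c lam i := by
      have : ∀ i : Fin t, ((u i - (k i : ℝ) : ℝ) : ℂ) * estarZ c lam i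
          = (u i : ℂ) * estarZ c lam i - (k i : ℂ) * estarZ c lam i := by
        intro i
        push_cast
        ring
      rw [Finset.sum_congr rfl (fun i _ => this i), Finset.sum_sub_distrib, hu, zero_sub]
    have hiter := iter ht c lam hroot (fun i => u i - (k i : ℝ)) m
    rw [← hEZ] at hiter
    have h1 : ‖lam‖ ^ m * K = ‖∑ i : Fin t, ((w i : ℝ) : ℂ) * estarZ c lam i‖ := by
      rw [hw, hiter, norm_mul, norm_pow, hv, norm_neg]
    have h2 : ‖∑ i : Fin t, ((w i : ℝ) : ℂ) * estarZ c lam i‖ ≤ S * ‖w‖ := by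
      calc ‖∑ i : Fin t, ((w i : ℝ) : ℂ) * estarZ c lam i‖
          ≤ ∑ i : Fin t, ‖((w i : ℝ) : ℂ) * estarZ c lam i‖ := norm_sum_le _ _
        _ ≤ ∑ i : Fin t, ‖estarZ c lam i‖ * ‖w‖ := by
            apply Finset.sum_le_sum
            intro i _
            rw [norm_mul, Complex.norm_real, mul_comm]
            apply mul_le_mul_of_nonneg_left _ (norm_nonneg _)
            exact (norm_le_pi_norm w i)
        _ = S * ‖w‖ := by rw [← Finset.sum_mul, hSdef]
    have h4 : ‖lam‖ ^ m * K ≤ S * ‖w‖ := by rw [h1]; exact h2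
    rw [hrpow]
    calc (C₁^(t-1) * S)⁻¹ * (H ^ (t-1 : ℕ))⁻¹ * ‖lam‖ ^ m
        = ‖lam‖ ^ m * ((C₁*H)^(t-1))⁻¹ / S := by
          conv_rhs => rw [mul_pow]
          have hgen : ∀ (X Y Z M : ℝ), X ≠ 0 → Y ≠ 0 → Z ≠ 0 →
              (X * Z)⁻¹ * Y⁻¹ * M = M * (X*Y)⁻¹ / Z := by
            intro X Y Z M hX hY hZ
            field_simp
            try ring
            try tauto
          exact hgen _ _ _ _ (ne_of_gt hC₁pos) (ne_of_gt (pow_pos hHpos _)) (ne_of_gt hSpos)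
      _ ≤ ‖lam‖ ^ m * K / S :=
          (div_le_div_iff_of_pos_right hSpos).mpr
            (mul_le_mul_of_nonneg_left hK (pow_nonneg (norm_nonneg lam) m))
      _ ≤ ‖w‖ := by
          rw [div_le_iff₀ hSpos]
          calc ‖lam‖ ^ m * K ≤ S * ‖w‖ := h4
            _ = ‖w‖ * S := mul_comm _ _
  refine ⟨key, ?_⟩
  intro δ hδ0 hδhalf MM hMM
  have hLpos : (0:ℝ) < ‖lam‖ := lt_trans one_pos hlam
  have hlog : (0:ℝ) < Real.log (‖lam‖) := Real.log_pos hlam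
  rw [le_div_iff₀ hlog]
  have hcomb := lt_of_le_of_lt (key MM) (hMM MM le_rfl)
  set cc : ℝ := (C₁^(t-1) * S)⁻¹ with hcc
  have hccpos : (0:ℝ) < cc := inv_pos.mpr (mul_pos hC₁pos hSpos)
  have hHT : (0:ℝ) < H ^ ((t:ℝ) - 1) := Real.rpow_pos_of_pos hHpos _
  have h5 : ‖lam‖ ^ MM < δ / cc * H ^ ((t:ℝ) - 1) := by
    have hpos : (0:ℝ) < cc * H ^ (-((t:ℝ) - 1)) := by
      apply mul_pos hccpos (Real.rpow_pos_of_pos hHpos _)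
    rw [← lt_div_iff₀' hpos] at hcomb
    calc ‖lam‖ ^ MM < δ / (cc * H ^ (-((t:ℝ) - 1))) := hcomb
      _ = δ / cc * H ^ ((t:ℝ) - 1) := by
          rw [Real.rpow_neg hHpos.le]
          have hgen2 : ∀ (d e f : ℝ), e ≠ 0 → f ≠ 0 → d / (e * f⁻¹) = d / e * f := by
            intro d e f he hf
            field_simp
            try ring
            try tauto
          exact hgen2 _ _ _ (ne_of_gt hccpos) (ne_of_gt hHT)
  have h6 : (MM : ℝ) * Real.log (‖lam‖) < Real.log (δ / cc) + ((t:ℝ) - 1) * Real.log H := by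
    have hl := Real.log_lt_log (pow_pos hLpos MM) h5
    rw [Real.log_pow] at hl
    rw [Real.log_mul (ne_of_gt (div_pos hδ0 hccpos)) (ne_of_gt hHT), Real.log_rpow hHpos] at hl
    exact hl
  linarith
end
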